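/- arXiv:2102.07168 — 5 statements merged into one kernel-verified Lean document; each statement's English description precedes it below -/
import Mathlib

section
/- Let n ≥ 2, let G = SU(n) × SU(n), and let g = su(n) ⊕ su(n), on which G acts componentwise by conjugation ((U,V)·(X,Y) := (UXU⁻¹, VYV⁻¹)). Then the real vector space of symmetric ℝ-bilinear maps ψ : g × g → g satisfying ψ(u·x, u·y) = u·ψ(x,y) for all u ∈ G and x,y ∈ g has dimension 0 if n = 2 and dimension 2 if n ≥ 3. -/
open Matrix

/-- The square complex matrices of size `n`. -/
abbrev Mat (n : ℕ) := Matrix (Fin n) (Fin n) ℂ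

/-- `su n`: skew-Hermitian traceless `n × n` complex matrices, as a real subspace of `Mat n`. -/
noncomputable def su (n : ℕ) : Submodule ℝ (Mat n) where
  carrier := {A | Aᴴ = -A ∧ A.trace = 0}
  add_mem' := by
    rintro a b ⟨ha1, ha2⟩ ⟨hb1, hb2⟩
    exact ⟨by rw [conjTranspose_add, ha1, hb1, neg_add], by rw [trace_add, ha2, hb2, add_zero]⟩
  zero_mem' := ⟨by simp, by simp⟩
  smul_mem' := by
    rintro c a ⟨h1, h2⟩
    exact ⟨by rw [conjTranspose_smul, h1, star_trivial, smul_neg], by rw [trace_smul, h2, smul_zero]⟩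

/-- The special unitary group `SU(n)`. -/
abbrev SU (n : ℕ) := Matrix.specialUnitaryGroup (Fin n) ℂ

lemma SU.star_mul_self {n : ℕ} (U : SU n) : star (U : Mat n) * (U : Mat n) = 1 := U.2.1.1

lemma SU.inv_coe {n : ℕ} (U : SU n) : (U : Mat n)⁻¹ = star (U : Mat n) :=
  Matrix.inv_eq_left_inv (SU.star_mul_self U)

/-- Conjugation `U • A := U * A * U⁻¹` at the level of matrices. -/
noncomputable def conjMat {n : ℕ} (U : SU n) (A : Mat n) : Mat n := (U : Mat n) * A * (U : Mat n)⁻¹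

lemma conjMat_mem {n : ℕ} (U : SU n) {A : Mat n} (hA : A ∈ su n) : conjMat U A ∈ su n := by
  obtain ⟨h1, h2⟩ := hA
  have hs : (U : Mat n) * (star (U : Mat n)) = 1 := by
    rw [mul_eq_one_comm]; exact SU.star_mul_self U
  constructor
  · rw [conjMat, SU.inv_coe, Matrix.star_eq_conjTranspose, conjTranspose_mul, conjTranspose_mul,
      conjTranspose_conjTranspose, h1]
    simp [Matrix.mul_assoc, Matrix.neg_mul, Matrix.mul_neg]
  · rw [conjMat, SU.inv_coe, trace_mul_cycle, SU.star_mul_self U, Matrix.one_mul, h2]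

/-- The conjugation action of `SU(n)` on `su(n)`. -/
noncomputable def act {n : ℕ} (U : SU n) (x : su n) : su n := ⟨conjMat U x.1, conjMat_mem U x.2⟩

lemma act_add {n : ℕ} (U : SU n) (x y : su n) : act U (x + y) = act U x + act U y := by
  apply Subtype.ext
  show conjMat U (x.1 + y.1) = conjMat U x.1 + conjMat U y.1
  simp [conjMat, Matrix.mul_add, Matrix.add_mul]

lemma act_smul {n : ℕ} (U : SU n) (r : ℝ) (x : su n) : act U (r • x) = r • act U x := by
  apply Subtype.ext
  show conjMat U (r • x.1) = r • conjMat U x.1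
  simp [conjMat, Matrix.smul_mul, Matrix.mul_smul]

lemma act_zero {n : ℕ} (U : SU n) : act U (0 : su n) = 0 := by
  apply Subtype.ext
  show conjMat U 0 = 0
  simp [conjMat]

/-- `g = su(n) ⊕ su(n)`. -/
abbrev gsu (n : ℕ) := ↥(su n) × ↥(su n)

/-- The componentwise conjugation action of `SU(n) × SU(n)` on `su(n) ⊕ su(n)`. -/
noncomputable def act2 {n : ℕ} (u : SU n × SU n) (x : gsu n) : gsu n := (act u.1 x.1, act u.2 x.2)

lemma act2_add {n : ℕ} (u : SU n × SU n) (a b : gsu n) : act2 u (a + b) = act2 u a + act2 u b := by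
  simp [act2, act_add, Prod.ext_iff]

lemma act2_smul {n : ℕ} (u : SU n × SU n) (r : ℝ) (a : gsu n) :
    act2 u (r • a) = r • act2 u a := by
  simp [act2, act_smul, Prod.ext_iff]

lemma act2_zero {n : ℕ} (u : SU n × SU n) : act2 u (0 : gsu n) = 0 := by
  simp [act2, act_zero, Prod.ext_iff]

/-- `ψ : g × g → g` is symmetric, ℝ-bilinear and `SU(n) × SU(n)`-equivariant. -/
def IsSymmBilEquiv (n : ℕ) (ψ : gsu n × gsu n → gsu n) : Prop :=
  (∀ x y, ψ (x, y) = ψ (y, x)) ∧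
  (∀ x x' y, ψ (x + x', y) = ψ (x, y) + ψ (x', y)) ∧
  (∀ (r : ℝ) x y, ψ (r • x, y) = r • ψ (x, y)) ∧
  (∀ x y y', ψ (x, y + y') = ψ (x, y) + ψ (x, y')) ∧
  (∀ (r : ℝ) x y, ψ (x, r • y) = r • ψ (x, y)) ∧
  (∀ u x y, ψ (act2 u x, act2 u y) = act2 u (ψ (x, y)))

/-- The real vector space of symmetric bilinear `SU(n) × SU(n)`-equivariant maps `g × g → g`. -/
noncomputable def EquivBilSpace (n : ℕ) : Submodule ℝ ((gsu n × gsu n) → gsu n) where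
  carrier := {ψ | IsSymmBilEquiv n ψ}
  add_mem' := by
    rintro ψ φ ⟨hs, hal, hsl, har, hsr, he⟩ ⟨hs', hal', hsl', har', hsr', he'⟩
    refine ⟨fun x y => ?_, fun x x' y => ?_, fun r x y => ?_, fun x y y' => ?_,
      fun r x y => ?_, fun u x y => ?_⟩ <;> simp only [Pi.add_apply]
    · rw [hs, hs']
    · rw [hal, hal']; abel
    · rw [hsl, hsl', smul_add]
    · rw [har, har']; abel
    · rw [hsr, hsr', smul_add]
    · rw [he, he', act2_add]
  zero_mem' := by
    refine ⟨fun x y => rfl, fun x x' y => ?_, fun r x y => ?_, fun x y y' => ?_,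
      fun r x y => ?_, fun u x y => ?_⟩ <;> simp [act2_zero]
  smul_mem' := by
    rintro c ψ ⟨hs, hal, hsl, har, hsr, he⟩
    refine ⟨fun x y => ?_, fun x x' y => ?_, fun r x y => ?_, fun x y y' => ?_,
      fun r x y => ?_, fun u x y => ?_⟩ <;> simp only [Pi.smul_apply]
    · rw [hs]
    · rw [hal, smul_add]
    · rw [hsl, smul_comm]
    · rw [har, smul_add]
    · rw [hsr, smul_comm]
    · rw [he, act2_smul]
noncomputable def psiMat (n : ℕ) (X X' : Mat n) : Mat n :=
  Complex.I • (X * X' + X' * X - (((X * X' + X' * X).trace) / n) • (1 : Mat n))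

lemma psiMat_mem (n : ℕ) {X X' : Mat n} (hX : X ∈ su n) (hX' : X' ∈ su n) :
    psiMat n X X' ∈ su n := by
  rcases Nat.eq_zero_or_pos n with hn | hn
  · subst hn
    constructor
    · ext i j; exact i.elim0
    · simp [Matrix.trace]
  · have hnC : (n : ℂ) ≠ 0 := Nat.cast_ne_zero.mpr (by omega)
    set P : Mat n := X * X' + X' * X with hPdef
    have hP : Pᴴ = P := by
      rw [hPdef, conjTranspose_add, conjTranspose_mul, conjTranspose_mul, hX.1, hX'.1]
      simp [Matrix.neg_mul, Matrix.mul_neg, add_comm]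
    have ht : star P.trace = P.trace := by
      have h := Matrix.trace_conjTranspose P
      rw [hP] at h
      exact h.symm
    constructor
    · rw [psiMat, conjTranspose_smul, conjTranspose_sub, ← hPdef, hP, conjTranspose_smul,
        conjTranspose_one, star_div₀, star_natCast, ht, Complex.star_def, Complex.conj_I,
        neg_smul]
    · rw [psiMat, trace_smul, trace_sub, ← hPdef, trace_smul, trace_one]
      simp only [smul_eq_mul, Fintype.card_fin]
      rw [div_mul_cancel₀ _ hnC, sub_self, mul_zero]

/-- `ψ₁((X,Y),(X',Y')) = (i·(XX'+X'X − (1/n)tr(XX'+X'X)·Id), 0)`. -/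
noncomputable def psi1 (n : ℕ) : gsu n × gsu n → gsu n :=
  fun p => (⟨psiMat n p.1.1.1 p.2.1.1, psiMat_mem n p.1.1.2 p.2.1.2⟩, 0)

/-- `ψ₂((X,Y),(X',Y')) = (0, i·(YY'+Y'Y − (1/n)tr(YY'+Y'Y)·Id))`. -/
noncomputable def psi2 (n : ℕ) : gsu n × gsu n → gsu n :=
  fun p => (0, ⟨psiMat n p.1.2.1 p.2.2.1, psiMat_mem n p.1.2.2 p.2.2.2⟩)

section Part1
open Complex Equiv

variable {n : ℕ}

lemma permMatrix_apply (σ : Equiv.Perm (Fin n)) (a b : Fin n) :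
    σ.permMatrix ℂ a b = if σ a = b then 1 else 0 := by
  rw [Equiv.Perm.permMatrix, PEquiv.toMatrix_toPEquiv_eq, Matrix.submatrix_apply, Matrix.one_apply]
  rfl

lemma star_permMatrix (σ : Equiv.Perm (Fin n)) :
    star (σ.permMatrix ℂ) = (σ⁻¹).permMatrix ℂ := by
  ext a b
  rw [Matrix.star_apply, permMatrix_apply, permMatrix_apply]
  by_cases h : σ b = a
  · have : σ⁻¹ a = b := by rw [← h]; simp
    simp [h, this]
  · have h' : ¬ σ⁻¹ a = b := fun hh => h (by rw [← hh]; simp)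
    simpa [h] using h'

lemma permMatrix_mul_permMatrix (σ τ : Equiv.Perm (Fin n)) :
    (σ.permMatrix ℂ) * (τ.permMatrix ℂ) = Equiv.Perm.permMatrix ℂ (σ.trans τ) := by
  rw [Equiv.Perm.permMatrix, Equiv.Perm.permMatrix, ← PEquiv.toMatrix_trans,
    ← Equiv.toPEquiv_trans]

lemma permMatrix_inv_mul (σ : Equiv.Perm (Fin n)) :
    ((σ⁻¹).permMatrix ℂ) * (σ.permMatrix ℂ) = 1 := by
  rw [permMatrix_mul_permMatrix]
  have h : Equiv.trans σ⁻¹ σ = Equiv.refl (Fin n) := by ext x; simp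
  show (Equiv.trans σ⁻¹ σ).toPEquiv.toMatrix = (1 : Mat n)
  rw [h, Equiv.toPEquiv_refl, PEquiv.toMatrix_refl]

/-- `pdMat σ s = P_σ * diagonal s`. -/
noncomputable def pdMat (σ : Equiv.Perm (Fin n)) (s : Fin n → ℂ) : Mat n :=
  σ.permMatrix ℂ * Matrix.diagonal s

lemma pdMat_mem (σ : Equiv.Perm (Fin n)) (s : Fin n → ℂ)
    (hs : ∀ b, star (s b) * s b = 1)
    (hdet : ((Equiv.Perm.sign σ : ℤ) : ℂ) * ∏ b, s b = 1) :
    pdMat σ s ∈ Matrix.specialUnitaryGroup (Fin n) ℂ := by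
  rw [Matrix.mem_specialUnitaryGroup_iff]
  constructor
  · rw [Matrix.mem_unitaryGroup_iff']
    show star (pdMat σ s) * pdMat σ s = 1
    rw [pdMat, Matrix.star_mul, star_permMatrix, Matrix.star_eq_conjTranspose (Matrix.diagonal s), Matrix.diagonal_conjTranspose, Matrix.mul_assoc,
      ← Matrix.mul_assoc (σ⁻¹.permMatrix ℂ), permMatrix_inv_mul, Matrix.one_mul,
      Matrix.diagonal_mul_diagonal]
    have : (fun i => star s i * s i) = fun _ => (1 : ℂ) := funext fun b => hs b
    rw [this, Matrix.diagonal_one]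
  · rw [pdMat, Matrix.det_mul, Matrix.det_permutation, Matrix.det_diagonal]
    simpa using hdet

/-- The SU element attached to a permutation and signs. -/
noncomputable def pdSU (σ : Equiv.Perm (Fin n)) (s : Fin n → ℂ)
    (hs : ∀ b, star (s b) * s b = 1)
    (hdet : ((Equiv.Perm.sign σ : ℤ) : ℂ) * ∏ b, s b = 1) : SU n :=
  ⟨pdMat σ s, pdMat_mem σ s hs hdet⟩

lemma conjMat_pdSU (σ : Equiv.Perm (Fin n)) (s : Fin n → ℂ) (hs) (hdet) (X : Mat n)
    (a b : Fin n) :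
    conjMat (pdSU σ s hs hdet) X a b = s (σ a) * star (s (σ b)) * X (σ a) (σ b) := by
  have h1 : (pdSU σ s hs hdet : Mat n)⁻¹ = star (pdSU σ s hs hdet : Mat n) :=
    SU.inv_coe _
  rw [conjMat, h1]
  show (pdMat σ s * X * star (pdMat σ s)) a b = _
  rw [pdMat, Matrix.star_mul, star_permMatrix, Matrix.star_eq_conjTranspose (Matrix.diagonal s), Matrix.diagonal_conjTranspose]
  have h2 : σ.permMatrix ℂ * Matrix.diagonal s * X *
      (Matrix.diagonal (star s) * σ⁻¹.permMatrix ℂ)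
      = σ.permMatrix ℂ * (Matrix.diagonal s * X * Matrix.diagonal (star s)) *
        σ⁻¹.permMatrix ℂ := by
    simp only [Matrix.mul_assoc]
  rw [h2, Equiv.Perm.permMatrix, Equiv.Perm.permMatrix, PEquiv.toMatrix_toPEquiv_mul,
    PEquiv.mul_toMatrix_toPEquiv]
  simp only [Matrix.submatrix_apply, id_eq, Equiv.symm_symm]
  show (Matrix.diagonal s * X * Matrix.diagonal (star s)) (σ a) ((σ⁻¹)⁻¹ b) = _
  rw [inv_inv]
  rw [Matrix.mul_diagonal, Matrix.diagonal_mul]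
  simp only [Pi.star_apply]
  ring

end Part1
section Part2
open Complex Equiv

variable {n : ℕ}

/-- diagonal su element from a real vector. -/
lemma diag_mem_su (t : Fin n → ℝ) (ht : ∑ k, t k = 0) :
    Matrix.diagonal (fun k => (t k : ℂ) * Complex.I) ∈ su n := by
  constructor
  · ext a b
    by_cases h : a = b
    · subst h
      simp [Matrix.conjTranspose_apply, Complex.ext_iff]
    · have h' : ¬ b = a := fun hh => h hh.symm
      simp [Matrix.conjTranspose_apply, Matrix.diagonal_apply_ne _ h,
        Matrix.diagonal_apply_ne _ h']
  · rw [Matrix.trace_diagonal, ← Finset.sum_mul]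
    have h1 : (∑ k, (t k : ℂ)) = ((∑ k, t k : ℝ) : ℂ) := by push_cast; rfl
    rw [h1, ht]
    simp

/-- Every element of `su n` is an `SU`-conjugate of a purely imaginary traceless diagonal. -/
lemma exists_diag_conj (hn : 0 < n) {A : Mat n} (hA : A ∈ su n) :
    ∃ (U : SU n) (t : Fin n → ℝ), (∑ k, t k = 0) ∧
      A = conjMat U (Matrix.diagonal (fun k => (t k : ℂ) * Complex.I)) := by
  have hH : (Complex.I • A).IsHermitian := by
    show (Complex.I • A)ᴴ = Complex.I • A
    rw [Matrix.conjTranspose_smul, hA.1]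
    simp [Complex.ext_iff]
  set V : Mat n := (hH.eigenvectorUnitary : Mat n) with hV
  have hVu : star V * V = 1 := (Matrix.mem_unitaryGroup_iff').mp hH.eigenvectorUnitary.2
  set t : Fin n → ℝ := fun k => -(hH.eigenvalues k) with htdef
  set D : Mat n := Matrix.diagonal (fun k => (t k : ℂ) * Complex.I) with hD
  have hDeq : D = (-Complex.I) • Matrix.diagonal (RCLike.ofReal ∘ hH.eigenvalues) := by
    rw [hD, ← Matrix.diagonal_smul]
    ext a b
    by_cases h : a = b
    · subst h
      simp only [Matrix.diagonal_apply_eq, Pi.smul_apply, Function.comp_apply, smul_eq_mul]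
      show ((t a : ℂ)) * Complex.I = -Complex.I * ((hH.eigenvalues a : ℝ) : ℂ)
      rw [htdef]
      push_cast
      ring
    · rw [Matrix.diagonal_apply_ne _ h, Matrix.diagonal_apply_ne _ h]
  have hspec : A = V * D * star V := by
    have h1 : Complex.I • A = V * Matrix.diagonal (RCLike.ofReal ∘ hH.eigenvalues) * star V :=
      hH.spectral_theorem
    have h2 : A = (-Complex.I) • (Complex.I • A) := by
      rw [smul_smul]; simp
    rw [h2, h1, hDeq]
    simp only [Matrix.mul_smul, Matrix.smul_mul]
  -- determinant correction
  set δ : ℂ := V.det with hdel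
  have hδ : star δ * δ = 1 := by
    have h3 := congrArg Matrix.det hVu
    rwa [Matrix.det_mul, Matrix.det_one, Matrix.star_eq_conjTranspose,
      Matrix.det_conjTranspose] at h3
  set z : Fin n → ℂ := fun b => if b = (⟨0, hn⟩ : Fin n) then star δ else 1 with hz
  have hzz : ∀ b, star (z b) * z b = 1 := by
    intro b
    by_cases hb : b = (⟨0, hn⟩ : Fin n)
    · simp only [hz, hb, if_pos]
      rw [star_star, mul_comm]
      exact hδ
    · simp [hz, hb]
  set U0 : Mat n := V * Matrix.diagonal z with hU0
  have hU0u : star U0 * U0 = 1 := by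
    rw [hU0, Matrix.star_mul, Matrix.star_eq_conjTranspose (Matrix.diagonal z),
      Matrix.diagonal_conjTranspose, Matrix.mul_assoc, ← Matrix.mul_assoc (star V),
      hVu, Matrix.one_mul, Matrix.diagonal_mul_diagonal]
    have h4 : (fun i => star (z i) * z i) = fun _ => (1:ℂ) := funext hzz
    show Matrix.diagonal (fun i => star (z i) * z i) = 1
    rw [h4, Matrix.diagonal_one]
  have hU0mem : U0 ∈ Matrix.specialUnitaryGroup (Fin n) ℂ := by
    rw [Matrix.mem_specialUnitaryGroup_iff]
    refine ⟨Matrix.mem_unitaryGroup_iff'.mpr hU0u, ?_⟩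
    rw [hU0, Matrix.det_mul, Matrix.det_diagonal, hz]
    rw [show (∏ b, (if b = (⟨0, hn⟩ : Fin n) then star δ else 1)) = star δ by
      rw [Finset.prod_ite_eq' Finset.univ (⟨0, hn⟩ : Fin n) (fun _ => star δ)]
      simp]
    rw [mul_comm]
    exact hδ
  refine ⟨⟨U0, hU0mem⟩, t, ?_, ?_⟩
  · -- trace condition
    have htr : A.trace = D.trace := by
      rw [hspec, Matrix.trace_mul_cycle, hVu, Matrix.one_mul]
    rw [hA.2] at htr
    rw [hD, Matrix.trace_diagonal] at htr
    have h3 : ((∑ k, t k : ℝ) : ℂ) * Complex.I = ∑ i, (t i : ℂ) * Complex.I := by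
      push_cast
      rw [Finset.sum_mul]
    have h4 : ((∑ k, t k : ℝ) : ℂ) * Complex.I = 0 := by rw [h3, ← htr]
    have h5 : ((∑ k, t k : ℝ) : ℂ) = 0 := by
      rcases mul_eq_zero.mp h4 with h | h
      · exact h
      · exact absurd h Complex.I_ne_zero
    exact_mod_cast h5
  · -- conjugation identity
    have hinv : ((⟨U0, hU0mem⟩ : SU n) : Mat n)⁻¹ = star U0 := SU.inv_coe _
    rw [conjMat, hinv]
    show A = U0 * D * star U0
    rw [hU0, Matrix.star_mul, Matrix.star_eq_conjTranspose (Matrix.diagonal z),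
      Matrix.diagonal_conjTranspose]
    have hmid : Matrix.diagonal z * D * Matrix.diagonal (star z) = D := by
      rw [hD, Matrix.diagonal_mul_diagonal, Matrix.diagonal_mul_diagonal]
      ext a b
      by_cases h : a = b
      · subst h
        simp only [Matrix.diagonal_apply_eq, Pi.star_apply]
        calc z a * ((t a : ℂ) * Complex.I) * star (z a)
            = (star (z a) * z a) * ((t a : ℂ) * Complex.I) := by ring
          _ = (t a : ℂ) * Complex.I := by rw [hzz a, one_mul]
      · rw [Matrix.diagonal_apply_ne _ h, Matrix.diagonal_apply_ne _ h]
    calc A = V * D * star V := hspec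
      _ = V * (Matrix.diagonal z * D * Matrix.diagonal (star z)) * star V := by rw [hmid]
      _ = V * Matrix.diagonal z * D * (Matrix.diagonal (star z) * star V) := by
          simp only [Matrix.mul_assoc]
end Part2
section Part3
open Complex Equiv

variable {n : ℕ}

/-! ### phase element `W j k` -/

noncomputable def wfun (j k : Fin n) : Fin n → ℂ :=
  fun b => if b = j then Complex.I else if b = k then -Complex.I else 1

lemma wfun_unit (j k : Fin n) : ∀ b, star (wfun j k b) * wfun j k b = 1 := by
  intro b
  unfold wfun
  by_cases h1 : b = j
  · simp [h1]
  · by_cases h2 : b = k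
    · subst h2
      rw [if_neg h1, if_pos rfl]
      simp
    · simp [h1, h2]

lemma prod_wfun {j k : Fin n} (hjk : j ≠ k) : ∏ b, wfun j k b = 1 := by
  rw [← Finset.mul_prod_erase Finset.univ _ (Finset.mem_univ j)]
  have hk : k ∈ Finset.univ.erase j := Finset.mem_erase.mpr ⟨Ne.symm hjk, Finset.mem_univ k⟩
  rw [← Finset.mul_prod_erase _ _ hk]
  have h1 : wfun j k j = Complex.I := by simp [wfun]
  have h2 : wfun j k k = -Complex.I := by simp [wfun, hjk.symm]
  have h3 : ∀ b ∈ (Finset.univ.erase j).erase k, wfun j k b = 1 := by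
    intro b hb
    have hbk := (Finset.mem_erase.mp hb).1
    have hbj := (Finset.mem_erase.mp (Finset.mem_erase.mp hb).2).1
    simp [wfun, hbk, hbj]
  rw [h1, h2, Finset.prod_congr rfl h3, Finset.prod_const_one]
  simp

noncomputable def Wsu (j k : Fin n) (hjk : j ≠ k) : SU n :=
  pdSU 1 (wfun j k) (wfun_unit j k)
    (by rw [prod_wfun hjk]; simp)

lemma conjMat_Wsu_apply (j k : Fin n) (hjk : j ≠ k) (X : Mat n) (a b : Fin n) :
    conjMat (Wsu j k hjk) X a b = wfun j k a * star (wfun j k b) * X a b := by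
  rw [Wsu, conjMat_pdSU]
  rfl

lemma conjMat_Wsu_offdiag (j k : Fin n) (hjk : j ≠ k) (X : Mat n) :
    conjMat (Wsu j k hjk) X j k = - X j k := by
  rw [conjMat_Wsu_apply]
  have h1 : wfun j k j = Complex.I := by simp [wfun]
  have h2 : wfun j k k = -Complex.I := by simp [wfun, hjk.symm]
  rw [h1, h2]
  simp [Complex.star_def]

lemma conjMat_Wsu_diagonal (j k : Fin n) (hjk : j ≠ k) (d : Fin n → ℂ) :
    conjMat (Wsu j k hjk) (Matrix.diagonal d) = Matrix.diagonal d := by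
  ext a b
  rw [conjMat_Wsu_apply]
  by_cases h : a = b
  · subst h
    rw [Matrix.diagonal_apply_eq]
    have := wfun_unit j k a
    calc wfun j k a * star (wfun j k a) * d a = (star (wfun j k a) * wfun j k a) * d a := by ring
      _ = d a := by rw [this, one_mul]
  · simp [Matrix.diagonal_apply_ne _ h]

/-! ### swap element -/

noncomputable def sfun (k : Fin n) : Fin n → ℂ := fun b => if b = k then -1 else 1

lemma sfun_unit (k : Fin n) : ∀ b, star (sfun k b) * sfun k b = 1 := by
  intro b
  unfold sfun
  by_cases h : b = k <;> simp [h]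

noncomputable def SWsu (j k : Fin n) (hjk : j ≠ k) : SU n :=
  pdSU (Equiv.swap j k) (sfun k) (sfun_unit k)
    (by
      rw [show (∏ b, sfun k b) = -1 by
        unfold sfun
        rw [Finset.prod_ite_eq' Finset.univ k (fun _ => (-1 : ℂ))]
        simp]
      rw [Equiv.Perm.sign_swap hjk]
      norm_num)

lemma conjMat_SWsu_apply (j k : Fin n) (hjk : j ≠ k) (X : Mat n) (a b : Fin n) :
    conjMat (SWsu j k hjk) X a b =
      sfun k (Equiv.swap j k a) * star (sfun k (Equiv.swap j k b)) *
        X (Equiv.swap j k a) (Equiv.swap j k b) := by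
  rw [SWsu, conjMat_pdSU]

lemma conjMat_SWsu_diag_entry (j k : Fin n) (hjk : j ≠ k) (X : Mat n) (a : Fin n) :
    conjMat (SWsu j k hjk) X a a = X (Equiv.swap j k a) (Equiv.swap j k a) := by
  rw [conjMat_SWsu_apply]
  have h := sfun_unit k (Equiv.swap j k a)
  have hreal : star (sfun k (Equiv.swap j k a)) = sfun k (Equiv.swap j k a) := by
    unfold sfun
    by_cases h2 : Equiv.swap j k a = k <;> simp [h2]
  rw [hreal] at h ⊢
  calc sfun k (Equiv.swap j k a) * sfun k (Equiv.swap j k a) * X _ _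
      = X (Equiv.swap j k a) (Equiv.swap j k a) := by rw [h, one_mul]

lemma conjMat_SWsu_diagonal (j k : Fin n) (hjk : j ≠ k) (d : Fin n → ℂ) :
    conjMat (SWsu j k hjk) (Matrix.diagonal d) =
      Matrix.diagonal (fun a => d (Equiv.swap j k a)) := by
  ext a b
  by_cases h : a = b
  · subst h
    rw [conjMat_SWsu_diag_entry, Matrix.diagonal_apply_eq, Matrix.diagonal_apply_eq]
  · rw [conjMat_SWsu_apply, Matrix.diagonal_apply_ne _ h]
    have h2 : Equiv.swap j k a ≠ Equiv.swap j k b := fun hh => h (Equiv.injective _ hh)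
    rw [Matrix.diagonal_apply_ne _ h2, mul_zero]

/-! ### basis diagonal elements -/

/-- `hvec j = e_j - (1/n)·𝟙`. -/
noncomputable def hvec (j : Fin n) : Fin n → ℝ := fun a => (if a = j then 1 else 0) - 1 / n

lemma hvec_sum (hn : 0 < n) (j : Fin n) : ∑ a, hvec j a = 0 := by
  unfold hvec
  rw [Finset.sum_sub_distrib, Finset.sum_ite_eq' Finset.univ j (fun _ => (1:ℝ))]
  simp only [Finset.mem_univ, if_pos, Finset.sum_const, Finset.card_univ, Fintype.card_fin,
    nsmul_eq_mul]
  rw [mul_one_div, div_self (by positivity : (n:ℝ) ≠ 0)]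
  ring

/-- `xvec j k = e_j - e_k`. -/
noncomputable def xvec (j k : Fin n) : Fin n → ℝ :=
  fun a => (if a = j then 1 else 0) - (if a = k then 1 else 0)

lemma xvec_sum (j k : Fin n) : ∑ a, xvec j k a = 0 := by
  unfold xvec
  rw [Finset.sum_sub_distrib, Finset.sum_ite_eq' Finset.univ j (fun _ => (1:ℝ)),
    Finset.sum_ite_eq' Finset.univ k (fun _ => (1:ℝ))]
  simp

noncomputable def diagMat (t : Fin n → ℝ) : Mat n :=
  Matrix.diagonal (fun a => (t a : ℂ) * Complex.I)

noncomputable def hsu (hn : 0 < n) (j : Fin n) : ↥(su n) :=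
  ⟨diagMat (hvec j), diag_mem_su _ (hvec_sum hn j)⟩

noncomputable def xsu (j k : Fin n) : ↥(su n) :=
  ⟨diagMat (xvec j k), diag_mem_su _ (xvec_sum j k)⟩

lemma xsu_self (j : Fin n) : xsu j j = 0 := by
  apply Subtype.ext
  show diagMat (xvec j j) = 0
  unfold diagMat xvec
  ext a b
  by_cases h : a = b
  · subst h; simp
  · simp [Matrix.diagonal_apply_ne _ h]

lemma act_SWsu_xsu (j k : Fin n) (hjk : j ≠ k) :
    act (SWsu j k hjk) (xsu j k) = - xsu j k := by
  apply Subtype.ext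
  show conjMat (SWsu j k hjk) (diagMat (xvec j k)) = -(diagMat (xvec j k))
  rw [diagMat, conjMat_SWsu_diagonal]
  ext a b
  by_cases h : a = b
  · subst h
    rw [Matrix.diagonal_apply_eq]
    show ((xvec j k (Equiv.swap j k a) : ℂ)) * Complex.I = -(Matrix.diagonal _ a a)
    rw [Matrix.diagonal_apply_eq]
    have : xvec j k (Equiv.swap j k a) = - xvec j k a := by
      unfold xvec
      by_cases h1 : a = j
      · subst h1; rw [Equiv.swap_apply_left]; simp [hjk, hjk.symm]
      · by_cases h2 : a = k
        · subst h2; rw [Equiv.swap_apply_right]; simp [hjk, hjk.symm]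
        · rw [Equiv.swap_apply_of_ne_of_ne h1 h2]
          simp [h1, h2]
    rw [this]
    push_cast
    ring
  · rw [Matrix.diagonal_apply_ne _ h]
    show (0 : ℂ) = -(Matrix.diagonal _ a b)
    rw [Matrix.diagonal_apply_ne _ h, neg_zero]

lemma act_SWsu_hsu (hn : 0 < n) (j k m : Fin n) (hjk : j ≠ k) :
    act (SWsu j k hjk) (hsu hn m) = hsu hn (Equiv.swap j k m) := by
  apply Subtype.ext
  show conjMat (SWsu j k hjk) (diagMat (hvec m)) = diagMat (hvec (Equiv.swap j k m))
  rw [diagMat, conjMat_SWsu_diagonal]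
  have hv : ∀ a, hvec m (Equiv.swap j k a) = hvec (Equiv.swap j k m) a := by
    intro a
    unfold hvec
    congr 1
    by_cases hh : Equiv.swap j k a = m
    · rw [if_pos hh, if_pos (by rw [← hh]; simp)]
    · rw [if_neg hh, if_neg (fun c => hh (by rw [c]; simp))]
  show Matrix.diagonal (fun a => ((hvec m (Equiv.swap j k a) : ℝ) : ℂ) * Complex.I) = _
  unfold diagMat
  ext a b
  by_cases h : a = b
  · subst h
    rw [Matrix.diagonal_apply_eq, Matrix.diagonal_apply_eq, hv a]
  · rw [Matrix.diagonal_apply_ne _ h, Matrix.diagonal_apply_ne _ h]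

/-- matrix-level decomposition of a diagonal su matrix in terms of `hvec`s. -/
lemma diagMat_eq_sum_hsu (hn : 0 < n) (t : Fin n → ℝ) (ht : ∑ k, t k = 0) :
    diagMat t = ∑ j, (t j) • diagMat (hvec j) := by
  ext a b
  rw [Matrix.sum_apply]
  by_cases h : a = b
  · subst h
    unfold diagMat
    simp only [Matrix.smul_apply, Matrix.diagonal_apply_eq]
    have h1 : ∀ j, (t j) • ((hvec j a : ℂ) * Complex.I) = ((t j * hvec j a : ℝ) : ℂ) * Complex.I := by
      intro j
      rw [Complex.real_smul]
      push_cast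
      ring
    rw [Finset.sum_congr rfl (fun j _ => h1 j)]
    have h2 : (∑ j, (((t j * hvec j a : ℝ) : ℂ) * Complex.I))
        = ((∑ j, t j * hvec j a : ℝ) : ℂ) * Complex.I := by
      push_cast
      rw [Finset.sum_mul]
    rw [h2]
    have h3 : ∑ j, t j * hvec j a = t a := by
      unfold hvec
      have h4 : ∀ j ∈ Finset.univ, t j * ((if a = j then (1:ℝ) else 0) - 1 / n) =
          (if j = a then t j else 0) - t j * (1/n) := by
        intro j _
        by_cases hj : a = j
        · subst hj; rw [if_pos rfl, if_pos rfl]; ring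
        · have hj' : ¬ j = a := fun hh => hj hh.symm
          rw [if_neg hj, if_neg hj']; ring
      rw [Finset.sum_congr rfl h4, Finset.sum_sub_distrib,
        Finset.sum_ite_eq' Finset.univ a t, ← Finset.sum_mul, ht]
      simp
    rw [h3]
  · unfold diagMat
    simp [Matrix.diagonal_apply_ne _ h]

/-- matrix-level: `h_j = (1/n) ∑ k x_{jk}`. -/
lemma hMat_eq_sum_xsu (hn : 0 < n) (j : Fin n) :
    diagMat (hvec j) = (n : ℝ)⁻¹ • ∑ k, diagMat (xvec j k) := by
  ext a b
  rw [Matrix.smul_apply, Matrix.sum_apply]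
  by_cases h : a = b
  · subst h
    unfold diagMat
    simp only [Matrix.diagonal_apply_eq]
    have : (∑ k, ((xvec j k a : ℂ) * Complex.I)) = ((∑ k, xvec j k a : ℝ) : ℂ) * Complex.I := by
      push_cast
      rw [Finset.sum_mul]
    rw [this]
    have h2 : ∑ k, xvec j k a = n * (if a = j then (1:ℝ) else 0) - 1 := by
      unfold xvec
      rw [Finset.sum_sub_distrib]
      rw [Finset.sum_const, Finset.sum_ite_eq Finset.univ a (fun _ => (1:ℝ))]
      simp [Finset.card_univ, mul_comm]
    rw [h2]
    rw [Complex.real_smul]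
    unfold hvec
    push_cast
    have hn' : (n : ℂ) ≠ 0 := by
      exact_mod_cast (by positivity : (n:ℝ) ≠ 0)
    field_simp
  · unfold diagMat
    simp [Matrix.diagonal_apply_ne _ h]

end Part3
section Part4
open Complex Equiv

variable {n : ℕ}

lemma su_coe_sum {ι : Type*} (s : Finset ι) (f : ι → ↥(su n)) :
    ((∑ i ∈ s, f i : ↥(su n)) : Mat n) = ∑ i ∈ s, (f i : Mat n) :=
  AddSubmonoidClass.coe_finset_sum f s

/-- A fixed point of conjugation is zero. -/
lemma fixed_point_zero (hn : 2 ≤ n) (m : ↥(su n)) (hm : ∀ V : SU n, act V m = m) :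
    m = 0 := by
  apply Subtype.ext
  show (m : Mat n) = (0 : Mat n)
  have hoff : ∀ a b, a ≠ b → (m : Mat n) a b = 0 := by
    intro a b hab
    have h2 : conjMat (Wsu a b hab) (m : Mat n) = (m : Mat n) :=
      congrArg Subtype.val (hm (Wsu a b hab))
    have h3 := congrArg (fun X : Mat n => X a b) h2
    rw [conjMat_Wsu_offdiag] at h3
    have h4 : (2 : ℂ) * (m : Mat n) a b = 0 := by linear_combination - h3
    rcases mul_eq_zero.mp h4 with h | h
    · norm_num at h
    · exact h
  have hdiag : ∀ a c : Fin n, (m : Mat n) a a = (m : Mat n) c c := by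
    intro a c
    by_cases hac : a = c
    · rw [hac]
    · have h2 : conjMat (SWsu a c hac) (m : Mat n) = (m : Mat n) :=
        congrArg Subtype.val (hm (SWsu a c hac))
      have h3 := congrArg (fun X : Mat n => X a a) h2
      rw [conjMat_SWsu_diag_entry, Equiv.swap_apply_left] at h3
      exact h3.symm
  have htr : ∑ c, (m : Mat n) c c = 0 := m.2.2
  have hzero : ∀ a, (m : Mat n) a a = 0 := by
    intro a
    have h1 : ∑ c, (m : Mat n) c c = (n : ℂ) * (m : Mat n) a a := by
      rw [Finset.sum_congr rfl (fun c _ => (hdiag a c).symm), Finset.sum_const,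
        Finset.card_univ, Fintype.card_fin, nsmul_eq_mul]
    rw [h1] at htr
    rcases mul_eq_zero.mp htr with h | h
    · exfalso
      have : (n : ℂ) ≠ 0 := by
        exact_mod_cast Nat.cast_ne_zero.mpr (by omega)
      exact this h
    · exact h
  ext a b
  by_cases h : a = b
  · subst h
    rw [hzero a]
    rfl
  · rw [hoff a b h]
    rfl

/-- A linear map on `su n` invariant under the conjugation action vanishes. -/
lemma invariant_slot_zero (hn : 2 ≤ n) {M : Type} [AddCommGroup M] [Module ℝ M]
    (f : ↥(su n) →ₗ[ℝ] M) (hf : ∀ (V : SU n) (y : ↥(su n)), f (act V y) = f y) :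
    ∀ y, f y = 0 := by
  have hn0 : 0 < n := by omega
  have hx : ∀ j k, f (xsu j k) = 0 := by
    intro j k
    by_cases hjk : j = k
    · rw [hjk, xsu_self, map_zero]
    · have h1 := hf (SWsu j k hjk) (xsu j k)
      rw [act_SWsu_xsu, map_neg] at h1
      have h2 : f (xsu j k) + f (xsu j k) = 0 := by
        nth_rewrite 1 [← h1]
        exact neg_add_cancel _
      have h3 : (2:ℝ) • f (xsu j k) = 0 := by rw [two_smul]; exact h2
      rcases smul_eq_zero.mp h3 with h | h
      · norm_num at h
      · exact h
  have hh : ∀ j, f (hsu hn0 j) = 0 := by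
    intro j
    have hdecomp : hsu hn0 j = (n : ℝ)⁻¹ • ∑ k, xsu j k := by
      apply Subtype.ext
      rw [SetLike.val_smul, su_coe_sum]
      exact hMat_eq_sum_xsu hn0 j
    rw [hdecomp, _root_.map_smul, map_sum, Finset.sum_congr rfl (fun k _ => hx j k),
      Finset.sum_const_zero, smul_zero]
  intro y
  obtain ⟨U, t, ht, hy⟩ := exists_diag_conj hn0 y.2
  have hyd : y = act U ⟨diagMat t, diag_mem_su t ht⟩ := Subtype.ext hy
  rw [hyd, hf]
  have hdecomp : (⟨diagMat t, diag_mem_su t ht⟩ : ↥(su n)) = ∑ j, (t j) • hsu hn0 j := by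
    apply Subtype.ext
    rw [su_coe_sum]
    show diagMat t = _
    rw [diagMat_eq_sum_hsu hn0 t ht]
    rfl
  rw [hdecomp, map_sum, Finset.sum_congr rfl (fun j _ => by rw [_root_.map_smul, hh j, smul_zero]),
    Finset.sum_const_zero]

end Part4
section Part5
open Complex

variable {n : ℕ}

lemma conjMat_apply_star (U : SU n) (X : Mat n) :
    conjMat U X = (U : Mat n) * X * star (U : Mat n) := by
  rw [conjMat, SU.inv_coe]

lemma conjMat_mul (U : SU n) (X Y : Mat n) :
    conjMat U X * conjMat U Y = conjMat U (X * Y) := by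
  rw [conjMat, conjMat, conjMat, SU.inv_coe]
  have h : star (U : Mat n) * (U : Mat n) = 1 := SU.star_mul_self U
  calc (U : Mat n) * X * star (U : Mat n) * ((U : Mat n) * Y * star (U : Mat n))
      = (U : Mat n) * X * (star (U : Mat n) * (U : Mat n)) * Y * star (U : Mat n) := by
        simp only [Matrix.mul_assoc]
    _ = (U : Mat n) * (X * Y) * star (U : Mat n) := by
        rw [h, Matrix.mul_one]
        simp only [Matrix.mul_assoc]

lemma conjMat_add (U : SU n) (X Y : Mat n) :
    conjMat U (X + Y) = conjMat U X + conjMat U Y := by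
  simp [conjMat, Matrix.add_mul, Matrix.mul_add]

lemma conjMat_sub (U : SU n) (X Y : Mat n) :
    conjMat U (X - Y) = conjMat U X - conjMat U Y := by
  simp [conjMat, Matrix.sub_mul, Matrix.mul_sub]

lemma conjMat_smulC (U : SU n) (c : ℂ) (X : Mat n) :
    conjMat U (c • X) = c • conjMat U X := by
  simp [conjMat, Matrix.smul_mul, Matrix.mul_smul]

lemma conjMat_smulR (U : SU n) (r : ℝ) (X : Mat n) :
    conjMat U (r • X) = r • conjMat U X := by
  simp [conjMat, Matrix.smul_mul, Matrix.mul_smul]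

lemma conjMat_one (U : SU n) : conjMat U (1 : Mat n) = 1 := by
  rw [conjMat, Matrix.mul_one, SU.inv_coe, mul_eq_one_comm.mpr (SU.star_mul_self U)]

lemma trace_conjMat (U : SU n) (X : Mat n) : (conjMat U X).trace = X.trace := by
  rw [conjMat, SU.inv_coe, Matrix.trace_mul_cycle, SU.star_mul_self U, Matrix.one_mul]

lemma psiMat_symmetric (X Y : Mat n) : psiMat n X Y = psiMat n Y X := by
  rw [psiMat, psiMat, add_comm (X * Y)]

lemma psiMat_add_left (X Y Z : Mat n) :
    psiMat n (X + Y) Z = psiMat n X Z + psiMat n Y Z := by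
  unfold psiMat
  rw [Matrix.add_mul, Matrix.mul_add]
  rw [show X * Z + Y * Z + (Z * X + Z * Y) = (X * Z + Z * X) + (Y * Z + Z * Y) by abel]
  rw [Matrix.trace_add, add_div, add_smul]
  rw [show (X * Z + Z * X) + (Y * Z + Z * Y) -
      (((X * Z + Z * X).trace / n) • (1 : Mat n) + ((Y * Z + Z * Y).trace / n) • (1 : Mat n))
      = ((X * Z + Z * X) - ((X * Z + Z * X).trace / n) • (1 : Mat n)) +
        ((Y * Z + Z * Y) - ((Y * Z + Z * Y).trace / n) • (1 : Mat n)) by abel]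
  rw [smul_add]

lemma psiMat_smul_left (r : ℝ) (X Z : Mat n) :
    psiMat n (r • X) Z = r • psiMat n X Z := by
  unfold psiMat
  rw [Matrix.smul_mul, Matrix.mul_smul, ← smul_add, Matrix.trace_smul]
  rw [show (r • (X * Z + Z * X).trace) / n = r • ((X * Z + Z * X).trace / n) by
    rw [smul_div_assoc]]
  rw [smul_assoc, ← smul_sub, smul_comm]

lemma psiMat_add_right (X Y Z : Mat n) :
    psiMat n X (Y + Z) = psiMat n X Y + psiMat n X Z := by
  rw [psiMat_symmetric, psiMat_add_left, psiMat_symmetric Y X, psiMat_symmetric Z X]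

lemma psiMat_smul_right (r : ℝ) (X Z : Mat n) :
    psiMat n X (r • Z) = r • psiMat n X Z := by
  rw [psiMat_symmetric, psiMat_smul_left, psiMat_symmetric]

lemma psiMat_conj (U : SU n) (X Y : Mat n) :
    psiMat n (conjMat U X) (conjMat U Y) = conjMat U (psiMat n X Y) := by
  unfold psiMat
  rw [conjMat_mul, conjMat_mul, ← conjMat_add, trace_conjMat]
  rw [conjMat_smulC, conjMat_sub, conjMat_smulC, conjMat_one]

/-! ### values on diagonal pairs -/

lemma psiMat_diag_mul (t s : Fin n → ℝ) :
    diagMat t * diagMat s + diagMat s * diagMat t =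
      Matrix.diagonal (fun a => (-2 : ℂ) * ((t a * s a : ℝ) : ℂ)) := by
  unfold diagMat
  rw [Matrix.diagonal_mul_diagonal, Matrix.diagonal_mul_diagonal, Matrix.diagonal_add]
  ext a b
  by_cases h : a = b
  · subst h
    rw [Matrix.diagonal_apply_eq, Matrix.diagonal_apply_eq]
    push_cast
    linear_combination (2 * (t a : ℂ) * (s a : ℂ)) * Complex.I_mul_I
  · rw [Matrix.diagonal_apply_ne _ h, Matrix.diagonal_apply_ne _ h]

lemma psiMat_diag_trace (t s : Fin n → ℝ) :
    (diagMat t * diagMat s + diagMat s * diagMat t).trace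
      = (-2 : ℂ) * ((∑ c, t c * s c : ℝ) : ℂ) := by
  rw [psiMat_diag_mul, Matrix.trace_diagonal, ← Finset.mul_sum]
  push_cast
  rfl

lemma psiMat_diag_offdiag (t s : Fin n → ℝ) (a b : Fin n) (h : a ≠ b) :
    psiMat n (diagMat t) (diagMat s) a b = 0 := by
  unfold psiMat
  rw [Matrix.smul_apply, Matrix.sub_apply, psiMat_diag_mul, Matrix.diagonal_apply_ne _ h,
    Matrix.smul_apply, Matrix.one_apply_ne h]
  simp

lemma psiMat_diag_diag (t s : Fin n → ℝ) (a : Fin n) :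
    psiMat n (diagMat t) (diagMat s) a a =
      Complex.I * (-2) * (((t a * s a : ℝ) : ℂ) - ((∑ c, t c * s c : ℝ) : ℂ) / n) := by
  unfold psiMat
  rw [Matrix.smul_apply, Matrix.sub_apply, Matrix.smul_apply, Matrix.one_apply_eq,
    psiMat_diag_trace, psiMat_diag_mul, Matrix.diagonal_apply_eq]
  rw [smul_eq_mul, smul_eq_mul, mul_one]
  ring

end Part5
section Part6
open Complex Equiv

variable {n : ℕ}

lemma exists_perm_pair {j k j' k' : Fin n} (h : j ≠ k) (h' : j' ≠ k') :
    ∃ σ : Equiv.Perm (Fin n), σ j = j' ∧ σ k = k' := by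
  refine ⟨(Equiv.swap j j').trans (Equiv.swap (Equiv.swap j j' k) k'), ?_, ?_⟩
  · rw [Equiv.trans_apply, Equiv.swap_apply_left]
    have h1 : j' ≠ Equiv.swap j j' k := by
      intro hh
      have : Equiv.swap j j' j = Equiv.swap j j' k := by
        rw [Equiv.swap_apply_left, ← hh]
      exact h (Equiv.injective _ this)
    exact Equiv.swap_apply_of_ne_of_ne h1 h'
  · rw [Equiv.trans_apply, Equiv.swap_apply_left]

lemma exists_perm_triple {j l k j' l' k' : Fin n} (h1 : j ≠ l) (h2 : j ≠ k) (h3 : l ≠ k)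
    (h1' : j' ≠ l') (h2' : j' ≠ k') (h3' : l' ≠ k') :
    ∃ σ : Equiv.Perm (Fin n), σ j = j' ∧ σ l = l' ∧ σ k = k' := by
  obtain ⟨σ₁, hj, hl⟩ := exists_perm_pair h1 h1'
  set k₁ := σ₁ k with hk₁
  have hj'k₁ : j' ≠ k₁ := by
    rw [← hj, hk₁]
    exact fun c => h2 (Equiv.injective _ c)
  have hl'k₁ : l' ≠ k₁ := by
    rw [← hl, hk₁]
    exact fun c => h3 (Equiv.injective _ c)
  refine ⟨σ₁.trans (Equiv.swap k₁ k'), ?_, ?_, ?_⟩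
  · rw [Equiv.trans_apply, hj]
    exact Equiv.swap_apply_of_ne_of_ne hj'k₁ h2'
  · rw [Equiv.trans_apply, hl]
    exact Equiv.swap_apply_of_ne_of_ne hl'k₁ h3'
  · rw [Equiv.trans_apply, ← hk₁, Equiv.swap_apply_left]

lemma perm_inv_of_swap_inv (c : Fin n → Fin n → Fin n → ℂ)
    (hc : ∀ (a b : Fin n), a ≠ b → ∀ j l k,
      c (Equiv.swap a b j) (Equiv.swap a b l) (Equiv.swap a b k) = c j l k) :
    ∀ (σ : Equiv.Perm (Fin n)) (j l k : Fin n), c (σ j) (σ l) (σ k) = c j l k := by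
  intro σ
  refine Equiv.Perm.swap_induction_on σ ?_ ?_
  · intro j l k; rfl
  · intro f x y hxy ih j l k
    simp only [Equiv.Perm.mul_apply]
    rw [hc x y hxy, ih]

/-- act of `Wsu` fixes diagonal su elements. -/
lemma act_Wsu_hsu (hn0 : 0 < n) (a b m : Fin n) (hab : a ≠ b) :
    act (Wsu a b hab) (hsu hn0 m) = hsu hn0 m :=
  Subtype.ext (conjMat_Wsu_diagonal a b hab _)

/-- sum of hvec over the index j. -/
lemma sum_hsu_zero (hn0 : 0 < n) : (∑ j, hsu hn0 j : ↥(su n)) = 0 := by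
  apply Subtype.ext
  rw [su_coe_sum]
  show ∑ j, diagMat (hvec j) = (0 : Mat n)
  ext a b
  rw [Matrix.sum_apply]
  by_cases h : a = b
  · subst h
    unfold diagMat
    simp only [Matrix.diagonal_apply_eq]
    have h1 : (∑ j, ((hvec j a : ℂ) * Complex.I)) = ((∑ j, hvec j a : ℝ) : ℂ) * Complex.I := by
      push_cast
      rw [Finset.sum_mul]
    rw [h1]
    have h2 : ∑ j : Fin n, hvec j a = 0 := by
      unfold hvec
      rw [Finset.sum_sub_distrib, Finset.sum_ite_eq Finset.univ a (fun _ => (1:ℝ)),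
        Finset.sum_const, Finset.card_univ, Fintype.card_fin, nsmul_eq_mul]
      rw [mul_one_div, div_self (by positivity : (n:ℝ) ≠ 0)]
      simp
    rw [h2]
    simp
  · unfold diagMat
    simp [Matrix.diagonal_apply_ne _ h]

/-- decomposition of a diagonal su element. -/
lemma diagSu_decomp (hn0 : 0 < n) (t : Fin n → ℝ) (ht : ∑ k, t k = 0) :
    (⟨diagMat t, diag_mem_su t ht⟩ : ↥(su n)) = ∑ j, (t j) • hsu hn0 j := by
  apply Subtype.ext
  rw [su_coe_sum]
  show diagMat t = _
  rw [diagMat_eq_sum_hsu hn0 t ht]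
  rfl

/-- dot product of hvec's. -/
lemma hvec_dot (hn0 : 0 < n) (j l : Fin n) :
    ∑ c, hvec j c * hvec l c = (if l = j then (1:ℝ) else 0) - 1 / n := by
  unfold hvec
  have h1 : ∀ c, ((if c = j then (1:ℝ) else 0) - 1 / n) * ((if c = l then (1:ℝ) else 0) - 1 / n)
      = (if c = j then (1:ℝ) else 0) * (if c = l then (1:ℝ) else 0)
        - (1/n) * (if c = j then (1:ℝ) else 0) - (1/n) * (if c = l then (1:ℝ) else 0)
        + 1/n^2 := by
    intro c
    ring
  rw [Finset.sum_congr rfl (fun c _ => h1 c)]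
  rw [Finset.sum_add_distrib, Finset.sum_sub_distrib, Finset.sum_sub_distrib]
  rw [← Finset.mul_sum, ← Finset.mul_sum]
  rw [Finset.sum_ite_eq' Finset.univ j (fun _ => (1:ℝ)),
    Finset.sum_ite_eq' Finset.univ l (fun _ => (1:ℝ))]
  have h2 : ∀ c : Fin n, (if c = j then (1:ℝ) else 0) * (if c = l then (1:ℝ) else 0)
      = if c = j ∧ c = l then 1 else 0 := by
    intro c
    by_cases hj : c = j <;> by_cases hl : c = l <;> simp [hj, hl]
  rw [Finset.sum_congr rfl (fun c _ => h2 c)]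
  have h3 : (∑ c : Fin n, if c = j ∧ c = l then (1:ℝ) else 0) = if l = j then 1 else 0 := by
    by_cases hjl : l = j
    · subst hjl
      rw [if_pos rfl]
      have : ∀ c : Fin n, (if c = l ∧ c = l then (1:ℝ) else 0) = if c = l then 1 else 0 := by
        intro c; by_cases h : c = l <;> simp [h]
      rw [Finset.sum_congr rfl (fun c _ => this c),
        Finset.sum_ite_eq' Finset.univ l (fun _ => (1:ℝ))]
      simp
    · rw [if_neg hjl]
      have : ∀ c : Fin n, (if c = j ∧ c = l then (1:ℝ) else 0) = 0 := by
        intro c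
        by_cases h : c = j
        · subst h
          have : ¬ c = l := fun hh => hjl (by rw [← hh])
          simp [this]
        · simp [h]
      rw [Finset.sum_congr rfl (fun c _ => this c), Finset.sum_const_zero]
  rw [h3, Finset.sum_const, Finset.card_univ, Fintype.card_fin, nsmul_eq_mul]
  simp only [Finset.mem_univ, if_pos]
  have hnn : (n:ℝ) ≠ 0 := by positivity
  field_simp
  ring

/-- Bundled bilinear map from `psiMat`. -/
noncomputable def psiC (n : ℕ) : ↥(su n) →ₗ[ℝ] ↥(su n) →ₗ[ℝ] ↥(su n) :=
  LinearMap.mk₂ ℝ (fun x y => (⟨psiMat n x.1 y.1, psiMat_mem n x.2 y.2⟩ : ↥(su n)))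
    (fun x x' y => Subtype.ext (psiMat_add_left x.1 x'.1 y.1))
    (fun r x y => Subtype.ext (psiMat_smul_left r x.1 y.1))
    (fun x y y' => Subtype.ext (psiMat_add_right x.1 y.1 y'.1))
    (fun r x y => Subtype.ext (psiMat_smul_right r x.1 y.1))

lemma psiC_apply (x y : ↥(su n)) : ((psiC n x y : ↥(su n)) : Mat n) = psiMat n x.1 y.1 := rfl

lemma psiC_symm (x y : ↥(su n)) : psiC n x y = psiC n y x :=
  Subtype.ext (psiMat_symmetric x.1 y.1)

lemma psiC_equiv (U : SU n) (x y : ↥(su n)) :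
    psiC n (act U x) (act U y) = act U (psiC n x y) :=
  Subtype.ext (psiMat_conj U x.1 y.1)

/-- Two symmetric equivariant bilinear maps agreeing on the `hsu` basis pairs agree. -/
lemma bilinear_ext (hn0 : 0 < n) (B C : ↥(su n) →ₗ[ℝ] ↥(su n) →ₗ[ℝ] ↥(su n))
    (hBsymm : ∀ x y, B x y = B y x) (hCsymm : ∀ x y, C x y = C y x)
    (hBequiv : ∀ (U : SU n) x y, B (act U x) (act U y) = act U (B x y))
    (hCequiv : ∀ (U : SU n) x y, C (act U x) (act U y) = act U (C x y))
    (h : ∀ j l, B (hsu hn0 j) (hsu hn0 l) = C (hsu hn0 j) (hsu hn0 l)) :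
    ∀ x y, B x y = C x y := by
  have hdiagpair : ∀ (t s : Fin n → ℝ) (ht : ∑ k, t k = 0) (hs : ∑ k, s k = 0),
      B ⟨diagMat t, diag_mem_su t ht⟩ ⟨diagMat s, diag_mem_su s hs⟩
        = C ⟨diagMat t, diag_mem_su t ht⟩ ⟨diagMat s, diag_mem_su s hs⟩ := by
    intro t s ht hs
    rw [diagSu_decomp hn0 t ht, diagSu_decomp hn0 s hs]
    simp only [map_sum, LinearMap.sum_apply, _root_.map_smul, LinearMap.smul_apply,
      Finset.smul_sum]
    exact Finset.sum_congr rfl fun j _ => Finset.sum_congr rfl fun l _ => by rw [h l j]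
  have hQ : ∀ x, B x x = C x x := by
    intro x
    obtain ⟨U, t, ht, hx⟩ := exists_diag_conj hn0 x.2
    have hxd : x = act U ⟨diagMat t, diag_mem_su t ht⟩ := Subtype.ext hx
    rw [hxd, hBequiv, hCequiv, hdiagpair t t ht ht]
  intro x y
  have hexpB : B (x+y) (x+y) = (B x x + B x y) + (B y x + B y y) := by
    calc B (x+y) (x+y) = (B x + B y) (x + y) := DFunLike.congr_fun (map_add B x y) (x+y)
      _ = B x (x+y) + B y (x+y) := rfl
      _ = (B x x + B x y) + (B y x + B y y) := by rw [map_add (B x) x y, map_add (B y) x y]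
  have hexpC : C (x+y) (x+y) = (C x x + C x y) + (C y x + C y y) := by
    calc C (x+y) (x+y) = (C x + C y) (x + y) := DFunLike.congr_fun (map_add C x y) (x+y)
      _ = C x (x+y) + C y (x+y) := rfl
      _ = (C x x + C x y) + (C y x + C y y) := by rw [map_add (C x) x y, map_add (C y) x y]
  have h1 : (B x x + B x y) + (B y x + B y y) = (C x x + C x y) + (C y x + C y y) := by
    rw [← hexpB, ← hexpC, hQ (x+y)]
  rw [hQ x, hQ y, hBsymm y x, hCsymm y x] at h1
  have h2 : (B x y + B x y) + (C x x + C y y) = (C x y + C x y) + (C x x + C y y) := by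
    calc (B x y + B x y) + (C x x + C y y) = (C x x + B x y) + (B x y + C y y) := by abel
      _ = (C x x + C x y) + (C x y + C y y) := h1
      _ = (C x y + C x y) + (C x x + C y y) := by abel
  have h3 := add_right_cancel h2
  have h4 : (2:ℝ) • B x y = (2:ℝ) • C x y := by rw [two_smul, two_smul]; exact h3
  exact smul_right_injective (↥(su n)) (two_ne_zero) h4

end Part6
section Part7
open Complex Equiv

variable {n : ℕ}

theorem core_bilinear (hn : 2 ≤ n)
    (B : ↥(su n) →ₗ[ℝ] ↥(su n) →ₗ[ℝ] ↥(su n))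
    (hsymm : ∀ x y, B x y = B y x)
    (hequiv : ∀ (U : SU n) (x y : ↥(su n)), B (act U x) (act U y) = act U (B x y)) :
    ∃ α : ℝ, (n = 2 → α = 0) ∧
      ∀ x y : ↥(su n), ((B x y : ↥(su n)) : Mat n) = α • psiMat n (x : Mat n) (y : Mat n) := by
  have hn0 : 0 < n := by omega
  set c : Fin n → Fin n → Fin n → ℂ :=
    fun j l k => ((B (hsu hn0 j) (hsu hn0 l) : ↥(su n)) : Mat n) k k with hcdef
  have hswap : ∀ (a b : Fin n), a ≠ b → ∀ j l k,
      c (Equiv.swap a b j) (Equiv.swap a b l) (Equiv.swap a b k) = c j l k := by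
    intro a b hab j l k
    show ((B (hsu hn0 (Equiv.swap a b j)) (hsu hn0 (Equiv.swap a b l)) : ↥(su n)) : Mat n) _ _ = _
    rw [← act_SWsu_hsu hn0 a b j hab, ← act_SWsu_hsu hn0 a b l hab, hequiv]
    show conjMat (SWsu a b hab) ((B (hsu hn0 j) (hsu hn0 l) : ↥(su n)) : Mat n)
      (Equiv.swap a b k) (Equiv.swap a b k) = _
    rw [conjMat_SWsu_diag_entry, Equiv.swap_apply_self]
  have hperm : ∀ (σ : Equiv.Perm (Fin n)) j l k, c (σ j) (σ l) (σ k) = c j l k :=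
    perm_inv_of_swap_inv c hswap
  have hcsymm : ∀ j l k, c j l k = c l j k := by
    intro j l k
    show ((B (hsu hn0 j) (hsu hn0 l) : ↥(su n)) : Mat n) k k = _
    rw [hsymm]
  have hoffd : ∀ j l (a b : Fin n), a ≠ b →
      ((B (hsu hn0 j) (hsu hn0 l) : ↥(su n)) : Mat n) a b = 0 := by
    intro j l a b hab
    have h1 : B (hsu hn0 j) (hsu hn0 l) = act (Wsu a b hab) (B (hsu hn0 j) (hsu hn0 l)) := by
      rw [← hequiv, act_Wsu_hsu, act_Wsu_hsu]
    have h2 := congrArg (fun m : ↥(su n) => (m : Mat n) a b) h1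
    rw [show ((act (Wsu a b hab) (B (hsu hn0 j) (hsu hn0 l)) : ↥(su n)) : Mat n)
        = conjMat (Wsu a b hab) ((B (hsu hn0 j) (hsu hn0 l) : ↥(su n)) : Mat n) from rfl,
      conjMat_Wsu_offdiag] at h2
    have h4 : (2:ℂ) * ((B (hsu hn0 j) (hsu hn0 l) : ↥(su n)) : Mat n) a b = 0 := by
      linear_combination h2
    rcases mul_eq_zero.mp h4 with h | h
    · norm_num at h
    · exact h
  have htr : ∀ j l, ∑ k, c j l k = 0 := by
    intro j l
    have h := (B (hsu hn0 j) (hsu hn0 l)).2.2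
    simpa [Matrix.trace, Matrix.diag] using h
  have hsum1 : ∀ l k, ∑ j, c j l k = 0 := by
    intro l k
    have h4 : ∑ j, c j l k = ((∑ j, B (hsu hn0 j) (hsu hn0 l) : ↥(su n)) : Mat n) k k := by
      rw [su_coe_sum, Matrix.sum_apply]
    have h5 : (∑ j, B (hsu hn0 j) (hsu hn0 l)) = 0 := by
      rw [← LinearMap.sum_apply, ← map_sum, sum_hsu_zero hn0, map_zero, LinearMap.zero_apply]
    rw [h4, h5]
    rfl
  -- distinguished indices
  set i0 : Fin n := ⟨0, hn0⟩ with hi0def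
  set i1 : Fin n := ⟨1, by omega⟩ with hi1def
  have hi01 : i0 ≠ i1 := by
    intro h
    have := congrArg Fin.val h
    simp [hi0def, hi1def] at this
  set A := c i0 i0 i0 with hAdef
  set Bc := c i0 i0 i1 with hBcdef
  set Cc := c i0 i1 i0 with hCcdef
  have hA : ∀ j, c j j j = A := by
    intro j
    have := hperm (Equiv.swap j i0) j j j
    rw [Equiv.swap_apply_left] at this
    exact this.symm
  have hB : ∀ j k, j ≠ k → c j j k = Bc := by
    intro j k hjk
    obtain ⟨σ, hσj, hσk⟩ := exists_perm_pair hjk hi01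
    have := hperm σ j j k
    rw [hσj, hσk] at this
    exact this.symm
  have hC : ∀ j k, j ≠ k → c j k j = Cc := by
    intro j k hjk
    obtain ⟨σ, hσj, hσk⟩ := exists_perm_pair hjk hi01
    have := hperm σ j k j
    rw [hσj, hσk] at this
    exact this.symm
  have hC2 : ∀ j k, j ≠ k → c j k k = Cc := by
    intro j k hjk
    rw [hcsymm]
    exact hC k j hjk.symm
  -- equation E1
  have hE1 : A + ((n:ℂ) - 1) * Bc = 0 := by
    have h0 := htr i0 i0
    have hv : ∀ k, c i0 i0 k = Bc + (if k = i0 then A - Bc else 0) := by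
      intro k
      by_cases hk : k = i0
      · subst hk
        rw [if_pos rfl, hA]
        ring
      · rw [if_neg hk, add_zero, hB i0 k (fun h => hk h.symm)]
    rw [Finset.sum_congr rfl (fun k _ => hv k), Finset.sum_add_distrib, Finset.sum_const,
      Finset.sum_ite_eq' Finset.univ i0 (fun _ => A - Bc), Finset.card_univ,
      Fintype.card_fin] at h0
    simp only [Finset.mem_univ, if_pos, nsmul_eq_mul] at h0
    linear_combination h0
  -- equation E3
  have hE3 : A + ((n:ℂ) - 1) * Cc = 0 := by
    have h0 := hsum1 i1 i1
    have hv : ∀ j, c j i1 i1 = Cc + (if j = i1 then A - Cc else 0) := by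
      intro j
      by_cases hj : j = i1
      · subst hj
        rw [if_pos rfl, hA]
        ring
      · rw [if_neg hj, add_zero, hC2 j i1 hj]
    rw [Finset.sum_congr rfl (fun j _ => hv j), Finset.sum_add_distrib, Finset.sum_const,
      Finset.sum_ite_eq' Finset.univ i1 (fun _ => A - Cc), Finset.card_univ,
      Fintype.card_fin] at h0
    simp only [Finset.mem_univ, if_pos, nsmul_eq_mul] at h0
    linear_combination h0
  by_cases hn2 : n = 2
  · -- n = 2 : everything vanishes
    have hthree : ∀ (a b d : Fin n), a ≠ b → a ≠ d → b ≠ d → False := by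
      intro a b d hab had hbd
      have ha := a.isLt
      have hb := b.isLt
      have hd := d.isLt
      have h1 : a.val ≠ b.val := fun h => hab (Fin.ext h)
      have h2 : a.val ≠ d.val := fun h => had (Fin.ext h)
      have h3 : b.val ≠ d.val := fun h => hbd (Fin.ext h)
      omega
    have hCc0 : Cc = 0 := by
      have h0 := htr i0 i1
      have hv : ∀ k, c i0 i1 k = Cc := by
        intro k
        by_cases hk0 : k = i0
        · subst hk0; rfl
        · by_cases hk1 : k = i1
          · subst hk1; exact hC2 i0 i1 hi01
          · exact (hthree i0 i1 k hi01 (fun h => hk0 h.symm) (fun h => hk1 h.symm)).elim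
      rw [Finset.sum_congr rfl (fun k _ => hv k), Finset.sum_const, Finset.card_univ,
        Fintype.card_fin, nsmul_eq_mul] at h0
      have hnne : (n:ℂ) ≠ 0 := Nat.cast_ne_zero.mpr (by omega)
      rcases mul_eq_zero.mp h0 with h | h
      · exact absurd h hnne
      · exact h
    have hA0 : A = 0 := by linear_combination hE3 - ((n:ℂ) - 1) * hCc0
    have hBc0 : Bc = 0 := by
      have hn2' : (n:ℂ) = 2 := by rw [hn2]; norm_num
      rw [hn2'] at hE1
      linear_combination hE1 - hA0
    have hc0 : ∀ j l k, c j l k = 0 := by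
      intro j l k
      by_cases hjl : j = l
      · subst hjl
        by_cases hkj : k = j
        · subst hkj; rw [hA, hA0]
        · rw [hB j k (fun h => hkj h.symm), hBc0]
      · by_cases hkj : k = j
        · subst hkj; rw [hC k l hjl, hCc0]
        · by_cases hkl : k = l
          · subst hkl; rw [hC2 j k hjl, hCc0]
          · exact (hthree j l k hjl (fun h => hkj h.symm) (fun h => hkl h.symm)).elim
    have hBzero : ∀ x y, B x y = 0 := by
      have hkey : ∀ j l, B (hsu hn0 j) (hsu hn0 l)
          = (0 : ↥(su n) →ₗ[ℝ] ↥(su n) →ₗ[ℝ] ↥(su n)) (hsu hn0 j) (hsu hn0 l) := by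
        intro j l
        apply Subtype.ext
        show ((B (hsu hn0 j) (hsu hn0 l) : ↥(su n)) : Mat n) = 0
        ext a b
        by_cases hab : a = b
        · subst hab
          exact hc0 j l a
        · exact hoffd j l a b hab
      exact bilinear_ext hn0 B 0 hsymm (by intro x y; simp) hequiv
        (by intro U x y; simp [act_zero]) hkey
    refine ⟨0, fun _ => rfl, fun x y => ?_⟩
    rw [hBzero x y, zero_smul]
    rfl
  · -- n ≥ 3
    have hn3 : 3 ≤ n := by omega
    set i2 : Fin n := ⟨2, by omega⟩ with hi2def
    have hi02 : i0 ≠ i2 := by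
      intro h
      have := congrArg Fin.val h
      simp [hi0def, hi2def] at this
    have hi12 : i1 ≠ i2 := by
      intro h
      have := congrArg Fin.val h
      simp [hi1def, hi2def] at this
    set Dc := c i0 i1 i2 with hDcdef
    have hD : ∀ j l k, j ≠ l → j ≠ k → l ≠ k → c j l k = Dc := by
      intro j l k h1 h2 h3
      obtain ⟨σ, hσj, hσl, hσk⟩ := exists_perm_triple h1 h2 h3 hi01 hi02 hi12
      have := hperm σ j l k
      rw [hσj, hσl, hσk] at this
      exact this.symm
    have hE2 : 2 * Cc + ((n:ℂ) - 2) * Dc = 0 := by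
      have h0 := htr i0 i1
      have hv : ∀ k, c i0 i1 k =
          Dc + ((if k = i0 then Cc - Dc else 0) + (if k = i1 then Cc - Dc else 0)) := by
        intro k
        by_cases hk0 : k = i0
        · subst hk0
          rw [if_pos rfl, if_neg hi01]
          show Cc = _
          ring
        · by_cases hk1 : k = i1
          · subst hk1
            rw [if_neg hk0, if_pos rfl, hC2 i0 i1 hi01]
            ring
          · rw [if_neg hk0, if_neg hk1,
              hD i0 i1 k hi01 (fun h => hk0 h.symm) (fun h => hk1 h.symm)]
            ring
      rw [Finset.sum_congr rfl (fun k _ => hv k), Finset.sum_add_distrib,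
        Finset.sum_add_distrib, Finset.sum_const,
        Finset.sum_ite_eq' Finset.univ i0 (fun _ => Cc - Dc),
        Finset.sum_ite_eq' Finset.univ i1 (fun _ => Cc - Dc), Finset.card_univ,
        Fintype.card_fin] at h0
      simp only [Finset.mem_univ, if_pos, nsmul_eq_mul] at h0
      linear_combination h0
    -- A is purely imaginary
    have hApure : A.re = 0 := by
      have h := (B (hsu hn0 i0) (hsu hn0 i0)).2.1
      have h2 := congrArg (fun X : Mat n => X i0 i0) h
      simp only [Matrix.conjTranspose_apply, Matrix.neg_apply] at h2
      have h3 := congrArg Complex.re h2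
      simp only [Complex.star_def, Complex.conj_re, Complex.neg_re] at h3
      show (((B (hsu hn0 i0) (hsu hn0 i0) : ↥(su n)) : Mat n) i0 i0).re = 0
      linarith [h3]
    have hAeq : A = (A.im : ℂ) * Complex.I := by
      apply Complex.ext
      · simp [hApure]
      · simp
    have hnne : (n:ℂ) ≠ 0 := Nat.cast_ne_zero.mpr (by omega)
    have hne1 : (n:ℂ) - 1 ≠ 0 := by
      rw [sub_ne_zero]
      intro h
      have : n = 1 := by exact_mod_cast h
      omega
    have hne2 : (n:ℂ) - 2 ≠ 0 := by
      rw [sub_ne_zero]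
      intro h
      have : n = 2 := by exact_mod_cast h
      omega
    have hrne : (n:ℝ) ≠ 0 := by positivity
    have hrne1 : (n:ℝ) - 1 ≠ 0 := by
      intro h
      have : (n:ℝ) = 1 := by linarith
      have : n = 1 := by exact_mod_cast this
      omega
    have hrne2 : (n:ℝ) - 2 ≠ 0 := by
      intro h
      have : (n:ℝ) = 2 := by linarith
      have : n = 2 := by exact_mod_cast this
      omega
    set α : ℝ := A.im * (n:ℝ)^2 / (-2 * ((n:ℝ) - 1) * ((n:ℝ) - 2)) with hα
    have hαC : (α : ℂ) = (A.im : ℂ) * (n:ℂ)^2 / (-2 * ((n:ℂ) - 1) * ((n:ℂ) - 2)) := by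
      rw [hα]
      push_cast
      rfl
    have hBcval : ((n:ℂ) - 1) * Bc = -A := by linear_combination hE1
    have hCcval : ((n:ℂ) - 1) * Cc = -A := by linear_combination hE3
    have hDcval : (((n:ℂ) - 1) * ((n:ℂ) - 2)) * Dc = 2 * A := by
      linear_combination ((n:ℂ) - 1) * hE2 - 2 * hE3
    -- the key agreement on basis pairs
    have hkey : ∀ j l, B (hsu hn0 j) (hsu hn0 l) = (α • psiC n) (hsu hn0 j) (hsu hn0 l) := by
      intro j l
      apply Subtype.ext
      have hco : (((α • psiC n) (hsu hn0 j) (hsu hn0 l) : ↥(su n)) : Mat n)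
          = α • psiMat n (diagMat (hvec j)) (diagMat (hvec l)) := rfl
      rw [hco]
      ext a b
      by_cases hab : a = b
      · subst hab
        rw [Matrix.smul_apply, psiMat_diag_diag, hvec_dot hn0 j l]
        show c j l a = _
        rw [Complex.real_smul]
        have hBc2 : Bc = -A / ((n:ℂ) - 1) := by
          field_simp
          linear_combination hBcval
        have hCc2 : Cc = -A / ((n:ℂ) - 1) := by
          field_simp
          linear_combination hCcval
        have hDc2 : Dc = 2 * A / (((n:ℂ) - 1) * ((n:ℂ) - 2)) := by
          field_simp
          linear_combination hDcval
        by_cases hjl : j = l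
        · subst hjl
          by_cases haj : a = j
          · subst haj
            have hP : hvec a a * hvec a a = (1 - 1/(n:ℝ)) * (1 - 1/(n:ℝ)) := by
              unfold hvec
              rw [if_pos rfl]
            have hS : (if (a : Fin n) = a then (1:ℝ) else 0) - 1/n = 1 - 1/(n:ℝ) := by
              rw [if_pos rfl]
            rw [hA, hP, hS, hAeq, hαC]
            push_cast
            field_simp
            ring
          · have hP : hvec j a * hvec j a = ((0:ℝ) - 1/n) * ((0:ℝ) - 1/n) := by
              unfold hvec
              rw [if_neg haj]
            have hS : (if (j : Fin n) = j then (1:ℝ) else 0) - 1/n = 1 - 1/(n:ℝ) := by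
              rw [if_pos rfl]
            rw [hB j a (fun h => haj h.symm), hP, hS, hBc2, hAeq, hαC]
            push_cast
            field_simp
            ring
        · by_cases haj : a = j
          · subst haj
            have hP : hvec a a * hvec l a = (1 - 1/(n:ℝ)) * ((0:ℝ) - 1/n) := by
              unfold hvec
              rw [if_pos rfl, if_neg (fun h : a = l => hjl h)]
            have hS : (if l = a then (1:ℝ) else 0) - 1/n = (0:ℝ) - 1/(n:ℝ) := by
              rw [if_neg (fun h : l = a => hjl h.symm)]
            rw [hC a l hjl, hP, hS, hCc2, hAeq, hαC]
            push_cast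
            field_simp
            ring
          · by_cases hal : a = l
            · subst hal
              have hP : hvec j a * hvec a a = ((0:ℝ) - 1/n) * (1 - 1/(n:ℝ)) := by
                unfold hvec
                rw [if_neg haj, if_pos rfl]
              have hS : (if (a : Fin n) = j then (1:ℝ) else 0) - 1/n = (0:ℝ) - 1/(n:ℝ) := by
                rw [if_neg haj]
              rw [hC2 j a hjl, hP, hS, hCc2, hAeq, hαC]
              push_cast
              field_simp
              ring
            · have hP : hvec j a * hvec l a = ((0:ℝ) - 1/n) * ((0:ℝ) - 1/n) := by
                unfold hvec
                rw [if_neg haj, if_neg hal]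
              have hS : (if l = j then (1:ℝ) else 0) - 1/n = (0:ℝ) - 1/(n:ℝ) := by
                rw [if_neg (fun h : l = j => hjl h.symm)]
              rw [hD j l a hjl (fun h => haj h.symm) (fun h => hal h.symm), hP, hS, hDc2,
                hAeq, hαC]
              push_cast
              field_simp
              ring
      · rw [Matrix.smul_apply, psiMat_diag_offdiag _ _ _ _ hab, smul_zero]
        exact hoffd j l a b hab
    have hfinal := bilinear_ext hn0 B (α • psiC n) hsymm
      (by
        intro x y
        show α • (psiC n x y) = α • (psiC n y x)
        rw [psiC_symm])
      hequiv
      (by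
        intro U x y
        show α • (psiC n (act U x) (act U y)) = act U (α • psiC n x y)
        rw [psiC_equiv, act_smul])
      hkey
    refine ⟨α, fun h => absurd h hn2, fun x y => ?_⟩
    rw [hfinal x y]
    rfl

end Part7
section Part8
open Complex

variable {n : ℕ}

lemma pair_add_fst (a b : ↥(su n)) : ((a + b, 0) : gsu n) = (a, 0) + (b, 0) := by
  rw [Prod.mk_add_mk, add_zero]

lemma pair_add_snd (a b : ↥(su n)) : (((0 : ↥(su n)), a + b) : gsu n) = (0, a) + (0, b) := by
  rw [Prod.mk_add_mk, add_zero]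

lemma pair_smul_fst (r : ℝ) (a : ↥(su n)) : ((r • a, 0) : gsu n) = r • (a, 0) := by
  rw [Prod.smul_mk, smul_zero]

lemma pair_smul_snd (r : ℝ) (a : ↥(su n)) : (((0 : ↥(su n)), r • a) : gsu n) = r • (0, a) := by
  rw [Prod.smul_mk, smul_zero]

lemma act_one (z : ↥(su n)) : act (1 : SU n) z = z := by
  apply Subtype.ext
  show conjMat (1 : SU n) (z : Mat n) = z
  rw [conjMat]
  rw [show ((1 : SU n) : Mat n) = (1 : Mat n) from rfl]
  rw [inv_one, Matrix.one_mul, Matrix.mul_one]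

lemma act2_fst (u : SU n × SU n) (x : gsu n) : (act2 u x).1 = act u.1 x.1 := rfl
lemma act2_snd (u : SU n × SU n) (x : gsu n) : (act2 u x).2 = act u.2 x.2 := rfl

/-- membership of psi1. -/
lemma psi1_mem : psi1 n ∈ EquivBilSpace n := by
  refine ⟨?_, ?_, ?_, ?_, ?_, ?_⟩
  · intro x y
    exact Prod.ext (Subtype.ext (psiMat_symmetric _ _)) rfl
  · intro x x' y
    refine Prod.ext (Subtype.ext ?_) ?_
    · show psiMat n ((x + x').1 : Mat n) (y.1 : Mat n) = _
      rw [show ((x + x').1 : Mat n) = (x.1 : Mat n) + (x'.1 : Mat n) from rfl, psiMat_add_left]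
      rfl
    · show (0 : ↥(su n)) = 0 + 0
      rw [add_zero]
  · intro r x y
    refine Prod.ext (Subtype.ext ?_) ?_
    · show psiMat n ((r • x).1 : Mat n) (y.1 : Mat n) = _
      rw [show ((r • x).1 : Mat n) = r • (x.1 : Mat n) from rfl, psiMat_smul_left]
      rfl
    · show (0 : ↥(su n)) = r • 0
      rw [smul_zero]
  · intro x y y'
    refine Prod.ext (Subtype.ext ?_) ?_
    · show psiMat n (x.1 : Mat n) ((y + y').1 : Mat n) = _
      rw [show ((y + y').1 : Mat n) = (y.1 : Mat n) + (y'.1 : Mat n) from rfl, psiMat_add_right]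
      rfl
    · show (0 : ↥(su n)) = 0 + 0
      rw [add_zero]
  · intro r x y
    refine Prod.ext (Subtype.ext ?_) ?_
    · show psiMat n (x.1 : Mat n) ((r • y).1 : Mat n) = _
      rw [show ((r • y).1 : Mat n) = r • (y.1 : Mat n) from rfl, psiMat_smul_right]
      rfl
    · show (0 : ↥(su n)) = r • 0
      rw [smul_zero]
  · intro u x y
    refine Prod.ext (Subtype.ext ?_) ?_
    · show psiMat n (conjMat u.1 (x.1 : Mat n)) (conjMat u.1 (y.1 : Mat n))
        = conjMat u.1 (psiMat n (x.1 : Mat n) (y.1 : Mat n))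
      exact psiMat_conj u.1 _ _
    · show (0 : ↥(su n)) = act u.2 0
      rw [act_zero]

/-- membership of psi2. -/
lemma psi2_mem : psi2 n ∈ EquivBilSpace n := by
  refine ⟨?_, ?_, ?_, ?_, ?_, ?_⟩
  · intro x y
    exact Prod.ext rfl (Subtype.ext (psiMat_symmetric _ _))
  · intro x x' y
    refine Prod.ext ?_ (Subtype.ext ?_)
    · show (0 : ↥(su n)) = 0 + 0
      rw [add_zero]
    · show psiMat n ((x + x').2 : Mat n) (y.2 : Mat n) = _
      rw [show ((x + x').2 : Mat n) = (x.2 : Mat n) + (x'.2 : Mat n) from rfl, psiMat_add_left]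
      rfl
  · intro r x y
    refine Prod.ext ?_ (Subtype.ext ?_)
    · show (0 : ↥(su n)) = r • 0
      rw [smul_zero]
    · show psiMat n ((r • x).2 : Mat n) (y.2 : Mat n) = _
      rw [show ((r • x).2 : Mat n) = r • (x.2 : Mat n) from rfl, psiMat_smul_left]
      rfl
  · intro x y y'
    refine Prod.ext ?_ (Subtype.ext ?_)
    · show (0 : ↥(su n)) = 0 + 0
      rw [add_zero]
    · show psiMat n (x.2 : Mat n) ((y + y').2 : Mat n) = _
      rw [show ((y + y').2 : Mat n) = (y.2 : Mat n) + (y'.2 : Mat n) from rfl, psiMat_add_right]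
      rfl
  · intro r x y
    refine Prod.ext ?_ (Subtype.ext ?_)
    · show (0 : ↥(su n)) = r • 0
      rw [smul_zero]
    · show psiMat n (x.2 : Mat n) ((r • y).2 : Mat n) = _
      rw [show ((r • y).2 : Mat n) = r • (y.2 : Mat n) from rfl, psiMat_smul_right]
      rfl
  · intro u x y
    refine Prod.ext ?_ (Subtype.ext ?_)
    · show (0 : ↥(su n)) = act u.1 0
      rw [act_zero]
    · show psiMat n (conjMat u.2 (x.2 : Mat n)) (conjMat u.2 (y.2 : Mat n))
        = conjMat u.2 (psiMat n (x.2 : Mat n) (y.2 : Mat n))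
      exact psiMat_conj u.2 _ _

/-- Every element of the space is a combination of `psi1` and `psi2`. -/
lemma exists_coeffs (hn : 2 ≤ n) (ψ : gsu n × gsu n → gsu n) (hψ : IsSymmBilEquiv n ψ) :
    ∃ α β : ℝ, (n = 2 → α = 0 ∧ β = 0) ∧ ψ = α • psi1 n + β • psi2 n := by
  obtain ⟨hs, hal, hsl, har, hsr, he⟩ := hψ
  -- cross terms vanish
  have cross1 : ∀ (x y' : ↥(su n)), ψ ((x, 0), (0, y')) = 0 := by
    intro x y'
    have hfst : (ψ ((x, 0), (0, y'))).1 = 0 := by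
      let f : ↥(su n) →ₗ[ℝ] ↥(su n) :=
        { toFun := fun a => (ψ ((x, 0), (0, a))).1
          map_add' := by
            intro a b
            show (ψ ((x, 0), (0, a + b))).1 = (ψ ((x, 0), (0, a))).1 + (ψ ((x, 0), (0, b))).1
            rw [pair_add_snd a b, har]
            rfl
          map_smul' := by
            intro r a
            show (ψ ((x, 0), (0, r • a))).1 = r • (ψ ((x, 0), (0, a))).1
            rw [pair_smul_snd r a, hsr]
            rfl }
      have hf : ∀ (V : SU n) (a : ↥(su n)), f (act V a) = f a := by
        intro V a
        show (ψ ((x, 0), (0, act V a))).1 = (ψ ((x, 0), (0, a))).1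
        have h1 := he ((1 : SU n), V) ((x, 0)) ((0, a))
        have h2 : act2 ((1 : SU n), V) ((x, 0) : gsu n) = (x, 0) := by
          refine Prod.ext ?_ ?_
          · show act 1 x = x
            exact act_one x
          · show act V 0 = 0
            exact act_zero V
        have h3 : act2 ((1 : SU n), V) (((0 : ↥(su n)), a) : gsu n) = (0, act V a) := by
          refine Prod.ext ?_ ?_
          · show act 1 0 = 0
            exact act_one 0
          · rfl
        rw [h2, h3] at h1
        rw [h1, act2_fst]
        exact act_one _
      exact invariant_slot_zero hn f hf y'
    have hsnd : (ψ ((x, 0), (0, y'))).2 = 0 := by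
      let g : ↥(su n) →ₗ[ℝ] ↥(su n) :=
        { toFun := fun a => (ψ ((a, 0), (0, y'))).2
          map_add' := by
            intro a b
            show (ψ ((a + b, 0), (0, y'))).2 = (ψ ((a, 0), (0, y'))).2 + (ψ ((b, 0), (0, y'))).2
            rw [pair_add_fst a b, hal]
            rfl
          map_smul' := by
            intro r a
            show (ψ ((r • a, 0), (0, y'))).2 = r • (ψ ((a, 0), (0, y'))).2
            rw [pair_smul_fst r a, hsl]
            rfl }
      have hg : ∀ (V : SU n) (a : ↥(su n)), g (act V a) = g a := by
        intro V a
        show (ψ ((act V a, 0), (0, y'))).2 = (ψ ((a, 0), (0, y'))).2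
        have h1 := he (V, (1 : SU n)) ((a, 0)) ((0, y'))
        have h2 : act2 (V, (1 : SU n)) ((a, 0) : gsu n) = (act V a, 0) := by
          refine Prod.ext rfl ?_
          · show act 1 0 = 0
            exact act_one 0
        have h3 : act2 (V, (1 : SU n)) (((0 : ↥(su n)), y') : gsu n) = (0, y') := by
          refine Prod.ext ?_ ?_
          · show act V 0 = 0
            exact act_zero V
          · show act 1 y' = y'
            exact act_one y'
        rw [h2, h3] at h1
        rw [h1, act2_snd]
        exact act_one _
      exact invariant_slot_zero hn g hg x
    exact Prod.ext hfst hsnd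
  have cross2 : ∀ (y x' : ↥(su n)), ψ ((0, y), (x', 0)) = 0 := by
    intro y x'
    rw [hs, cross1]
  have pure1snd : ∀ (x x' : ↥(su n)), (ψ ((x, 0), (x', 0))).2 = 0 := by
    intro x x'
    apply fixed_point_zero hn
    intro V
    have h1 := he ((1 : SU n), V) ((x, 0)) ((x', 0))
    have h2 : act2 ((1 : SU n), V) ((x, 0) : gsu n) = (x, 0) := by
      refine Prod.ext (act_one x) (act_zero V)
    have h3 : act2 ((1 : SU n), V) ((x', 0) : gsu n) = (x', 0) := by
      refine Prod.ext (act_one x') (act_zero V)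
    rw [h2, h3] at h1
    exact (congrArg Prod.snd h1).symm
  have pure2fst : ∀ (y y' : ↥(su n)), (ψ ((0, y), (0, y'))).1 = 0 := by
    intro y y'
    apply fixed_point_zero hn
    intro V
    have h1 := he (V, (1 : SU n)) (((0 : ↥(su n)), y)) (((0 : ↥(su n)), y'))
    have h2 : act2 (V, (1 : SU n)) (((0 : ↥(su n)), y) : gsu n) = (0, y) := by
      refine Prod.ext (act_zero V) (act_one y)
    have h3 : act2 (V, (1 : SU n)) (((0 : ↥(su n)), y') : gsu n) = (0, y') := by
      refine Prod.ext (act_zero V) (act_one y')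
    rw [h2, h3] at h1
    exact (congrArg Prod.fst h1).symm
  -- decomposition
  have hdecomp : ∀ (x y x' y' : ↥(su n)), ψ ((x, y), (x', y'))
      = ((ψ ((x, 0), (x', 0))).1, (ψ ((0, y), (0, y'))).2) := by
    intro x y x' y'
    have e1 : ((x, y) : gsu n) = (x, 0) + (0, y) := by
      rw [Prod.mk_add_mk, add_zero, zero_add]
    have e2 : ((x', y') : gsu n) = (x', 0) + (0, y') := by
      rw [Prod.mk_add_mk, add_zero, zero_add]
    rw [e1, e2, hal, har, har, cross1, cross2, add_zero, zero_add]
    refine Prod.ext ?_ ?_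
    · show (ψ ((x, 0), (x', 0))).1 + (ψ ((0, y), (0, y'))).1 = _
      rw [pure2fst, add_zero]
    · show (ψ ((x, 0), (x', 0))).2 + (ψ ((0, y), (0, y'))).2 = _
      rw [pure1snd, zero_add]
  -- bundled component bilinear maps
  let B1 : ↥(su n) →ₗ[ℝ] ↥(su n) →ₗ[ℝ] ↥(su n) :=
    LinearMap.mk₂ ℝ (fun x x' => (ψ ((x, 0), (x', 0))).1)
      (fun x x' y => by
        show (ψ ((x + x', 0), (y, 0))).1 = (ψ ((x, 0), (y, 0))).1 + (ψ ((x', 0), (y, 0))).1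
        rw [pair_add_fst x x', hal]
        rfl)
      (fun r x y => by
        show (ψ ((r • x, 0), (y, 0))).1 = r • (ψ ((x, 0), (y, 0))).1
        rw [pair_smul_fst r x, hsl]
        rfl)
      (fun x y y' => by
        show (ψ ((x, 0), (y + y', 0))).1 = (ψ ((x, 0), (y, 0))).1 + (ψ ((x, 0), (y', 0))).1
        rw [pair_add_fst y y', har]
        rfl)
      (fun r x y => by
        show (ψ ((x, 0), (r • y, 0))).1 = r • (ψ ((x, 0), (y, 0))).1
        rw [pair_smul_fst r y, hsr]
        rfl)
  let B2 : ↥(su n) →ₗ[ℝ] ↥(su n) →ₗ[ℝ] ↥(su n) :=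
    LinearMap.mk₂ ℝ (fun y y' => (ψ ((0, y), (0, y'))).2)
      (fun x x' y => by
        show (ψ ((0, x + x'), (0, y))).2 = (ψ ((0, x), (0, y))).2 + (ψ ((0, x'), (0, y))).2
        rw [pair_add_snd x x', hal]
        rfl)
      (fun r x y => by
        show (ψ ((0, r • x), (0, y))).2 = r • (ψ ((0, x), (0, y))).2
        rw [pair_smul_snd r x, hsl]
        rfl)
      (fun x y y' => by
        show (ψ ((0, x), (0, y + y'))).2 = (ψ ((0, x), (0, y))).2 + (ψ ((0, x), (0, y'))).2
        rw [pair_add_snd y y', har]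
        rfl)
      (fun r x y => by
        show (ψ ((0, x), (0, r • y))).2 = r • (ψ ((0, x), (0, y))).2
        rw [pair_smul_snd r y, hsr]
        rfl)
  have hB1symm : ∀ x y, B1 x y = B1 y x := by
    intro x y
    show (ψ ((x, 0), (y, 0))).1 = (ψ ((y, 0), (x, 0))).1
    rw [hs]
  have hB2symm : ∀ x y, B2 x y = B2 y x := by
    intro x y
    show (ψ ((0, x), (0, y))).2 = (ψ ((0, y), (0, x))).2
    rw [hs]
  have hB1equiv : ∀ (U : SU n) x y, B1 (act U x) (act U y) = act U (B1 x y) := by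
    intro U x y
    show (ψ ((act U x, 0), (act U y, 0))).1 = act U (ψ ((x, 0), (y, 0))).1
    have h1 := he ((U, U)) ((x, 0)) ((y, 0))
    have h2 : act2 ((U, U)) ((x, 0) : gsu n) = (act U x, 0) := Prod.ext rfl (act_zero U)
    have h3 : act2 ((U, U)) ((y, 0) : gsu n) = (act U y, 0) := Prod.ext rfl (act_zero U)
    rw [h2, h3] at h1
    rw [h1]
    rfl
  have hB2equiv : ∀ (U : SU n) x y, B2 (act U x) (act U y) = act U (B2 x y) := by
    intro U x y
    show (ψ ((0, act U x), (0, act U y))).2 = act U (ψ ((0, x), (0, y))).2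
    have h1 := he ((U, U)) (((0 : ↥(su n)), x)) (((0 : ↥(su n)), y))
    have h2 : act2 ((U, U)) (((0 : ↥(su n)), x) : gsu n) = (0, act U x) :=
      Prod.ext (act_zero U) rfl
    have h3 : act2 ((U, U)) (((0 : ↥(su n)), y) : gsu n) = (0, act U y) :=
      Prod.ext (act_zero U) rfl
    rw [h2, h3] at h1
    rw [h1]
    rfl
  obtain ⟨α, hα2, hαval⟩ := core_bilinear hn B1 hB1symm hB1equiv
  obtain ⟨β, hβ2, hβval⟩ := core_bilinear hn B2 hB2symm hB2equiv
  refine ⟨α, β, fun h => ⟨hα2 h, hβ2 h⟩, ?_⟩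
  funext p
  obtain ⟨⟨x, y⟩, ⟨x', y'⟩⟩ := p
  rw [show ((α • psi1 n + β • psi2 n) ((x, y), (x', y')))
      = α • psi1 n ((x, y), (x', y')) + β • psi2 n ((x, y), (x', y')) from rfl]
  rw [hdecomp x y x' y']
  unfold psi1 psi2
  refine Prod.ext ?_ ?_
  · show (ψ ((x, 0), (x', 0))).1
      = (α • (⟨psiMat n (x : Mat n) (x' : Mat n), psiMat_mem n x.2 x'.2⟩ : ↥(su n)) + β • 0 : ↥(su n))
    rw [smul_zero, add_zero]
    apply Subtype.ext
    rw [SetLike.val_smul]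
    exact hαval x x'
  · show (ψ ((0, y), (0, y'))).2
      = (α • (0 : ↥(su n)) + β • (⟨psiMat n (y : Mat n) (y' : Mat n), psiMat_mem n y.2 y'.2⟩ : ↥(su n)) : ↥(su n))
    rw [smul_zero, zero_add]
    apply Subtype.ext
    rw [SetLike.val_smul]
    exact hβval y y'

end Part8
/-- For `n ≥ 2`, the real vector space of symmetric ℝ-bilinear
`SU(n) × SU(n)`-equivariant maps `(su(n) ⊕ su(n)) × (su(n) ⊕ su(n)) → su(n) ⊕ su(n)`
has dimension `0` if `n = 2` and dimension `2` if `n ≥ 3`. -/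
theorem dim_equivariant_symmetric_bilinear_su_sum (n : ℕ) (hn : 2 ≤ n) :
    Module.finrank ℝ (EquivBilSpace n) = if n = 2 then 0 else 2 := by
  by_cases hn2 : n = 2
  · rw [if_pos hn2]
    have hbot : EquivBilSpace n = ⊥ := by
      rw [eq_bot_iff]
      intro ψ hψ
      rw [Submodule.mem_bot]
      obtain ⟨α, β, h2, heq⟩ := exists_coeffs hn ψ hψ
      obtain ⟨hα, hβ⟩ := h2 hn2
      rw [heq, hα, hβ, zero_smul, zero_smul, add_zero]
    rw [hbot]
    exact finrank_bot ℝ _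
  · rw [if_neg hn2]
    have hn0 : 0 < n := by omega
    have hn3 : 3 ≤ n := by omega
    have hspan : EquivBilSpace n = Submodule.span ℝ {psi1 n, psi2 n} := by
      apply le_antisymm
      · intro ψ hψ
        obtain ⟨α, β, _, heq⟩ := exists_coeffs hn ψ hψ
        exact Submodule.mem_span_pair.mpr ⟨α, β, heq.symm⟩
      · rw [Submodule.span_le]
        intro f hf
        simp only [Set.mem_insert_iff, Set.mem_singleton_iff] at hf
        rcases hf with rfl | rfl
        · exact psi1_mem
        · exact psi2_mem
    -- the nonvanishing entry
    set i0 : Fin n := ⟨0, hn0⟩ with hi0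
    set z : ↥(su n) := hsu hn0 i0 with hz
    have hr3 : (3:ℝ) ≤ (n:ℝ) := by exact_mod_cast hn3
    have hrne : (n:ℝ) ≠ 0 := by positivity
    have hvv : hvec i0 i0 = 1 - 1/(n:ℝ) := by
      unfold hvec
      rw [if_pos rfl]
    have hdot : ∑ c, hvec i0 c * hvec i0 c = 1 - 1/(n:ℝ) := by
      rw [hvec_dot hn0 i0 i0, if_pos rfl]
    have hval : psiMat n (diagMat (hvec i0)) (diagMat (hvec i0)) i0 i0
        = Complex.I * (-2) * ((((1 - 1/(n:ℝ)) * (1 - 1/(n:ℝ)) : ℝ) : ℂ)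
          - ((1 - 1/(n:ℝ) : ℝ) : ℂ) / n) := by
      rw [psiMat_diag_diag, hvv, hdot]
    have hwne : (1 - 1/(n:ℝ)) * (1 - 1/(n:ℝ)) - (1 - 1/(n:ℝ))/(n:ℝ) ≠ 0 := by
      have heq : (1 - 1/(n:ℝ)) * (1 - 1/(n:ℝ)) - (1 - 1/(n:ℝ))/(n:ℝ)
          = ((n:ℝ) - 1) * ((n:ℝ) - 2) / (n:ℝ)^2 := by
        field_simp
        ring
      rw [heq]
      have hpos : (0:ℝ) < ((n:ℝ) - 1) * ((n:ℝ) - 2) / (n:ℝ)^2 :=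
        div_pos (mul_pos (by linarith) (by linarith)) (by positivity)
      exact ne_of_gt hpos
    have hvalne : psiMat n (diagMat (hvec i0)) (diagMat (hvec i0)) i0 i0 ≠ 0 := by
      rw [hval]
      have hcast : (((1 - 1/(n:ℝ)) * (1 - 1/(n:ℝ)) : ℝ) : ℂ) - ((1 - 1/(n:ℝ) : ℝ) : ℂ) / n
          = (((1 - 1/(n:ℝ)) * (1 - 1/(n:ℝ)) - (1 - 1/(n:ℝ))/(n:ℝ) : ℝ) : ℂ) := by
        push_cast
        ring
      rw [hcast]
      exact mul_ne_zero (mul_ne_zero Complex.I_ne_zero (by norm_num))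
        (Complex.ofReal_ne_zero.mpr hwne)
    have hli : LinearIndependent ℝ ![psi1 n, psi2 n] := by
      rw [LinearIndependent.pair_iff]
      intro s t hst
      have h1 := congrFun hst ((z, z), (z, z))
      have hfst : s • (⟨psiMat n (z : Mat n) (z : Mat n), psiMat_mem n z.2 z.2⟩ : ↥(su n))
          + t • (0 : ↥(su n)) = 0 := congrArg Prod.fst h1
      have hsnd : s • (0 : ↥(su n))
          + t • (⟨psiMat n (z : Mat n) (z : Mat n), psiMat_mem n z.2 z.2⟩ : ↥(su n)) = 0 :=
        congrArg Prod.snd h1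
      rw [smul_zero, add_zero] at hfst
      rw [smul_zero, zero_add] at hsnd
      constructor
      · have h2 := congrArg (fun m : ↥(su n) => (m : Mat n) i0 i0) hfst
        rw [show ((s • (⟨psiMat n (z : Mat n) (z : Mat n), psiMat_mem n z.2 z.2⟩ : ↥(su n))
            : ↥(su n)) : Mat n) = s • psiMat n (z : Mat n) (z : Mat n) from rfl] at h2
        rw [Matrix.smul_apply] at h2
        rw [show ((0 : ↥(su n)) : Mat n) i0 i0 = 0 from rfl] at h2
        rw [show (z : Mat n) = diagMat (hvec i0) from rfl] at h2
        rw [Complex.real_smul] at h2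
        rcases mul_eq_zero.mp h2 with h | h
        · exact_mod_cast h
        · exact absurd h hvalne
      · have h2 := congrArg (fun m : ↥(su n) => (m : Mat n) i0 i0) hsnd
        rw [show ((t • (⟨psiMat n (z : Mat n) (z : Mat n), psiMat_mem n z.2 z.2⟩ : ↥(su n))
            : ↥(su n)) : Mat n) = t • psiMat n (z : Mat n) (z : Mat n) from rfl] at h2
        rw [Matrix.smul_apply] at h2
        rw [show ((0 : ↥(su n)) : Mat n) i0 i0 = 0 from rfl] at h2
        rw [show (z : Mat n) = diagMat (hvec i0) from rfl] at h2
        rw [Complex.real_smul] at h2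
        rcases mul_eq_zero.mp h2 with h | h
        · exact_mod_cast h
        · exact absurd h hvalne
    have hrange : ({psi1 n, psi2 n} : Set (gsu n × gsu n → gsu n))
        = Set.range ![psi1 n, psi2 n] := by
      ext f
      simp only [Set.mem_insert_iff, Set.mem_singleton_iff, Set.mem_range,
        Fin.exists_fin_two, Matrix.cons_val_zero, Matrix.cons_val_one, Matrix.head_cons]
      constructor
      · rintro (rfl | rfl)
        · exact Or.inl rfl
        · exact Or.inr rfl
      · rintro (rfl | rfl)
        · exact Or.inl rfl
        · exact Or.inr rfl
    rw [hspan, hrange, finrank_span_eq_card hli, Fintype.card_fin]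
end

section
/- Let n ≥ 2, let W = S_n × S_n, and let t = t' ⊕ t' where t' = {v ∈ ℂⁿ : v₁ + ⋯ + v_n = 0} carries the action of the symmetric group S_n by permutation of coordinates, and W acts on t componentwise. Then the complex vector space of symmetric ℂ-bilinear maps t × t → t that are equivariant for the W-action has dimension 0 if n = 2 and dimension 2 if n ≥ 3. -/
/-- `t' = {v ∈ ℂⁿ : v₁ + ⋯ + v_n = 0}`, the sum-zero hyperplane in `ℂⁿ`. -/
noncomputable def tprime (n : ℕ) : Submodule ℂ (Fin n → ℂ) where
  carrier := {v | ∑ i, v i = 0}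
  add_mem' := by
    intro a b ha hb
    simp only [Set.mem_setOf_eq] at *
    simp only [Pi.add_apply, Finset.sum_add_distrib, ha, hb, add_zero]
  zero_mem' := by simp
  smul_mem' := by
    intro c v hv
    simp only [Set.mem_setOf_eq, Pi.smul_apply, smul_eq_mul, ← Finset.mul_sum] at *
    rw [hv, mul_zero]

/-- The permutation action of `S_n` on `t'`. -/
noncomputable def permAct {n : ℕ} (s : Equiv.Perm (Fin n)) (v : tprime n) : tprime n :=
  ⟨fun i => (v : Fin n → ℂ) (s⁻¹ i), by
    have hv : ∑ i, (v : Fin n → ℂ) i = 0 := v.2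
    show ∑ i, (v : Fin n → ℂ) (s⁻¹ i) = 0
    rw [Equiv.sum_comp (s⁻¹ : Equiv.Perm (Fin n)) (v : Fin n → ℂ), hv]⟩

/-- `t = t' ⊕ t'`. -/
noncomputable abbrev tsp (n : ℕ) := ↥(tprime n) × ↥(tprime n)

/-- The componentwise action of `W = S_n × S_n` on `t = t' ⊕ t'`. -/
noncomputable def wAct {n : ℕ} (w : Equiv.Perm (Fin n) × Equiv.Perm (Fin n)) (x : tsp n) : tsp n :=
  (permAct w.1 x.1, permAct w.2 x.2)

lemma permAct_add {n : ℕ} (s : Equiv.Perm (Fin n)) (a b : tprime n) :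
    permAct s (a + b) = permAct s a + permAct s b := rfl

lemma permAct_smul {n : ℕ} (s : Equiv.Perm (Fin n)) (c : ℂ) (a : tprime n) :
    permAct s (c • a) = c • permAct s a := rfl

lemma wAct_add {n : ℕ} (w : Equiv.Perm (Fin n) × Equiv.Perm (Fin n)) (a b : tsp n) :
    wAct w (a + b) = wAct w a + wAct w b := rfl

lemma wAct_smul {n : ℕ} (w : Equiv.Perm (Fin n) × Equiv.Perm (Fin n)) (c : ℂ) (a : tsp n) :
    wAct w (c • a) = c • wAct w a := rfl

/-- `B : t × t → t` is symmetric, ℂ-bilinear and `W = S_n × S_n`-equivariant. -/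
def IsSymmBilWEquiv (n : ℕ) (B : tsp n × tsp n → tsp n) : Prop :=
  (∀ x y, B (x, y) = B (y, x)) ∧
  (∀ x x' y, B (x + x', y) = B (x, y) + B (x', y)) ∧
  (∀ (c : ℂ) x y, B (c • x, y) = c • B (x, y)) ∧
  (∀ x y y', B (x, y + y') = B (x, y) + B (x, y')) ∧
  (∀ (c : ℂ) x y, B (x, c • y) = c • B (x, y)) ∧
  (∀ w x y, B (wAct w x, wAct w y) = wAct w (B (x, y)))

/-- The complex vector space of symmetric ℂ-bilinear `W`-equivariant maps `t × t → t`. -/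
noncomputable def WEquivBilSpace (n : ℕ) : Submodule ℂ ((tsp n × tsp n) → tsp n) where
  carrier := {B | IsSymmBilWEquiv n B}
  add_mem' := by
    rintro B C ⟨hs, hal, hsl, har, hsr, he⟩ ⟨hs', hal', hsl', har', hsr', he'⟩
    refine ⟨fun x y => ?_, fun x x' y => ?_, fun c x y => ?_, fun x y y' => ?_,
      fun c x y => ?_, fun w x y => ?_⟩ <;> simp only [Pi.add_apply]
    · rw [hs, hs']
    · rw [hal, hal']; abel
    · rw [hsl, hsl', smul_add]
    · rw [har, har']; abel
    · rw [hsr, hsr', smul_add]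
    · rw [he, he', wAct_add]
  zero_mem' := by
    refine ⟨fun x y => rfl, fun x x' y => ?_, fun c x y => ?_, fun x y y' => ?_,
      fun c x y => ?_, fun w x y => ?_⟩ <;> simp
    · rfl
  smul_mem' := by
    rintro c B ⟨hs, hal, hsl, har, hsr, he⟩
    refine ⟨fun x y => ?_, fun x x' y => ?_, fun d x y => ?_, fun x y y' => ?_,
      fun d x y => ?_, fun w x y => ?_⟩ <;> simp only [Pi.smul_apply]
    · rw [hs]
    · rw [hal, smul_add]
    · rw [hsl, smul_comm]
    · rw [har, smul_add]
    · rw [hsr, smul_comm]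
    · rw [he, wAct_smul]

/-! ### Auxiliary lemmas -/

lemma coe_permAct {n : ℕ} (s : Equiv.Perm (Fin n)) (v : tprime n) (i : Fin n) :
    (permAct s v : Fin n → ℂ) i = (v : Fin n → ℂ) (s⁻¹ i) := rfl

lemma permAct_one {n : ℕ} (v : tprime n) : permAct (1 : Equiv.Perm (Fin n)) v = v := by
  apply Subtype.ext; funext i
  show (v : Fin n → ℂ) ((1 : Equiv.Perm (Fin n))⁻¹ i) = (v : Fin n → ℂ) i
  simp

lemma permAct_zero {n : ℕ} (s : Equiv.Perm (Fin n)) : permAct s (0 : tprime n) = 0 := rfl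

noncomputable def vv {n : ℕ} (i j : Fin n) : tprime n :=
  ⟨fun k => (if k = i then 1 else 0) - (if k = j then 1 else 0), by
    show ∑ k : Fin n, ((if k = i then (1:ℂ) else 0) - (if k = j then 1 else 0)) = 0
    rw [Finset.sum_sub_distrib]
    simp⟩

lemma coe_vv {n : ℕ} (i j k : Fin n) :
    (vv i j : Fin n → ℂ) k = (if k = i then 1 else 0) - (if k = j then 1 else 0) := rfl

lemma vv_self {n : ℕ} (i : Fin n) : vv i i = 0 := by
  apply Subtype.ext; funext k
  show (if k = i then (1:ℂ) else 0) - (if k = i then 1 else 0) = 0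
  ring

lemma vv_neg {n : ℕ} (i j : Fin n) : vv j i = -vv i j := by
  apply Subtype.ext; funext k
  show (if k = j then (1:ℂ) else 0) - (if k = i then 1 else 0) = -(vv i j : Fin n → ℂ) k
  rw [coe_vv]; ring

lemma vv_add {n : ℕ} (i j k : Fin n) : vv k i + vv i j = vv k j := by
  apply Subtype.ext; funext m
  show (vv k i : Fin n → ℂ) m + (vv i j : Fin n → ℂ) m = (vv k j : Fin n → ℂ) m
  rw [coe_vv, coe_vv, coe_vv]; ring

lemma permAct_vv {n : ℕ} (s : Equiv.Perm (Fin n)) (i j : Fin n) :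
    permAct s (vv i j) = vv (s i) (s j) := by
  apply Subtype.ext; funext k
  rw [coe_permAct]
  show _ = (if k = s i then (1:ℂ) else 0) - (if k = s j then 1 else 0)
  rw [coe_vv]
  congr 2
  · simp [Equiv.Perm.inv_def, Equiv.symm_apply_eq]
  · simp [Equiv.Perm.inv_def, Equiv.symm_apply_eq]

lemma exists_perm_pair_s1 {n : ℕ} {i j : Fin n} (hij : i ≠ j) (a b : Fin n) (hab : a ≠ b) :
    ∃ s : Equiv.Perm (Fin n), s a = i ∧ s b = j := by
  refine ⟨(Equiv.swap (Equiv.swap a i b) j) * (Equiv.swap a i), ?_, ?_⟩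
  · have h1 : Equiv.swap a i a = i := Equiv.swap_apply_left a i
    have h2 : Equiv.swap a i b ≠ i := by
      intro h
      exact hab ((Equiv.swap a i).injective (h.trans h1.symm)).symm
    simp only [Equiv.Perm.mul_apply, h1]
    exact Equiv.swap_apply_of_ne_of_ne (Ne.symm h2) hij
  · simp only [Equiv.Perm.mul_apply]
    exact Equiv.swap_apply_left _ _

lemma allEq_zero {n : ℕ} (hn : 1 ≤ n) (z : tprime n) (o : Fin n)
    (h : ∀ i, (z : Fin n → ℂ) i = (z : Fin n → ℂ) o) : z = 0 := by
  have hz : ∑ i, (z : Fin n → ℂ) i = 0 := z.2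
  have hmul : (n : ℂ) * (z : Fin n → ℂ) o = 0 := by
    rw [← hz, Finset.sum_congr rfl (fun i _ => h i)]
    simp [Finset.card_univ, mul_comm]
  have hne : (n : ℂ) ≠ 0 := Nat.cast_ne_zero.mpr (by omega)
  have ho : (z : Fin n → ℂ) o = 0 := by
    rcases mul_eq_zero.mp hmul with h' | h'
    · exact absurd h' hne
    · exact h'
  apply Subtype.ext; funext i
  show (z : Fin n → ℂ) i = 0
  rw [h i, ho]

lemma invariant_eq_zero {n : ℕ} (hn : 1 ≤ n) (z : tprime n)
    (h : ∀ s : Equiv.Perm (Fin n), permAct s z = z) : z = 0 := by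
  have o : Fin n := ⟨0, by omega⟩
  refine allEq_zero hn z o (fun i => ?_)
  have h1 := congrArg Subtype.val (h (Equiv.swap o i))
  have h2 := congrFun h1 o
  rw [coe_permAct] at h2
  rw [← h2, Equiv.swap_inv, Equiv.swap_apply_left]

lemma tprime_span {n : ℕ} (o : Fin n) (a : tprime n) :
    a = ∑ i ∈ Finset.univ.erase o, (a : Fin n → ℂ) i • vv i o := by
  apply Subtype.ext
  rw [Submodule.coe_sum]
  funext k
  rw [Finset.sum_apply]
  simp only [SetLike.val_smul, Pi.smul_apply, smul_eq_mul, coe_vv]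
  by_cases hk : k = o
  · subst hk
    have hsum : ∑ i, (a : Fin n → ℂ) i = 0 := a.2
    have hthis := Finset.add_sum_erase Finset.univ (a : Fin n → ℂ) (Finset.mem_univ k)
    rw [hsum] at hthis
    have h2 : ∑ i ∈ Finset.univ.erase k, (a : Fin n → ℂ) i = -(a : Fin n → ℂ) k :=
      eq_neg_of_add_eq_zero_right hthis
    symm
    calc ∑ i ∈ Finset.univ.erase k, (a : Fin n → ℂ) i * ((if k = i then 1 else 0) - (if k = k then 1 else 0))
        = ∑ i ∈ Finset.univ.erase k, -(a : Fin n → ℂ) i := by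
          refine Finset.sum_congr rfl (fun i hi => ?_)
          have : k ≠ i := fun h => (Finset.mem_erase.mp hi).1 h.symm
          simp [this]
      _ = (a : Fin n → ℂ) k := by simp [h2]
  · rw [Finset.sum_eq_single k]
    · simp [hk]
    · intro b _ hb
      simp [Ne.symm hb, hk]
    · intro hnk
      exact absurd (Finset.mem_erase.mpr ⟨hk, Finset.mem_univ k⟩) hnk

/-! ### The core lemma: a symmetric bilinear map on `t'` vanishing on all
`(vv i j, vv i j)` is zero. -/

lemma core {n : ℕ} (hn : 2 ≤ n) (b : tprime n → tprime n → tprime n)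
    (hsymm : ∀ x y, b x y = b y x)
    (hal : ∀ x x' y, b (x + x') y = b x y + b x' y)
    (hsl : ∀ (c : ℂ) x y, b (c • x) y = c • b x y)
    (h0 : ∀ i j : Fin n, i ≠ j → b (vv i j) (vv i j) = 0) (x y : tprime n) :
    b x y = 0 := by
  have hz : ∀ y, b 0 y = 0 := fun y => by simpa using hsl 0 0 y
  have h0' : ∀ i j : Fin n, b (vv i j) (vv i j) = 0 := by
    intro i j
    by_cases h : i = j
    · subst h; rw [vv_self]; exact hz _
    · exact h0 i j h
  have har : ∀ x y y', b x (y + y') = b x y + b x y' := fun x y y' => by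
    rw [hsymm, hal, hsymm y x, hsymm y' x]
  have hsr : ∀ (c : ℂ) x y, b x (c • y) = c • b x y := fun c x y => by
    rw [hsymm, hsl, hsymm]
  have hcross : ∀ i j k : Fin n, b (vv i j) (vv k i) = 0 := by
    intro i j k
    have hexp : b (vv k i + vv i j) (vv k i + vv i j) =
        b (vv k i) (vv k i) + b (vv k i) (vv i j) +
          (b (vv i j) (vv k i) + b (vv i j) (vv i j)) := by
      rw [hal, har, har]
    rw [vv_add, h0', h0', h0', hsymm (vv k i)] at hexp
    have h3 : b (vv i j) (vv k i) + b (vv i j) (vv k i) = 0 := by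
      simpa using hexp.symm
    have h4 : (2 : ℂ) • b (vv i j) (vv k i) = 0 := by rw [two_smul]; exact h3
    exact (smul_eq_zero.mp h4).resolve_left two_ne_zero
  set o : Fin n := ⟨0, by omega⟩ with ho
  have hbasis : ∀ i ∈ Finset.univ.erase o, ∀ j ∈ Finset.univ.erase o,
      b (vv i o) (vv j o) = 0 := by
    intro i _ j _
    by_cases h : i = j
    · subst h; exact h0' i o
    · calc b (vv i o) (vv j o) = b (vv i o) (vv j i + vv i o) := by rw [vv_add i o j]
        _ = b (vv i o) (vv j i) + b (vv i o) (vv i o) := har _ _ _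
        _ = 0 := by rw [hcross i o j, h0', add_zero]
  have hb2 : ∀ i ∈ Finset.univ.erase o, b (vv i o) y = 0 := by
    intro i hi
    let R : tprime n →ₗ[ℂ] tprime n :=
      { toFun := fun z => b (vv i o) z
        map_add' := fun u v => har _ u v
        map_smul' := fun m u => hsr m _ u }
    have hRy : b (vv i o) y = R y := rfl
    rw [hRy, tprime_span o y, map_sum]
    refine Finset.sum_eq_zero (fun j hj => ?_)
    rw [map_smul]
    have hRz : R (vv j o) = 0 := hbasis i hi j hj
    rw [hRz, smul_zero]
  let L : tprime n →ₗ[ℂ] tprime n :=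
    { toFun := fun z => b z y
      map_add' := fun u v => hal u v y
      map_smul' := fun m u => hsl m u y }
  have hLx : b x y = L x := rfl
  rw [hLx, tprime_span o x, map_sum]
  refine Finset.sum_eq_zero (fun i hi => ?_)
  rw [map_smul]
  have hLz : L (vv i o) = 0 := hb2 i hi
  rw [hLz, smul_zero]

/-! ### Component analysis for equivariant bilinear maps -/

lemma transport_fst {n : ℕ} {B : tsp n × tsp n → tsp n}
    (he : ∀ w x y, B (wAct w x, wAct w y) = wAct w (B (x, y)))
    (s : Equiv.Perm (Fin n)) (a c : tprime n) :
    (B ((permAct s a, 0), (permAct s c, 0))).1 = permAct s ((B ((a, 0), (c, 0))).1) := by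
  have h := he (s, 1) (a, 0) (c, 0)
  rw [show wAct (s, (1 : Equiv.Perm (Fin n))) (a, (0 : tprime n)) = (permAct s a, 0) from by
        simp [wAct, permAct_zero],
      show wAct (s, (1 : Equiv.Perm (Fin n))) (c, (0 : tprime n)) = (permAct s c, 0) from by
        simp [wAct, permAct_zero]] at h
  exact congrArg Prod.fst h

lemma transport_snd {n : ℕ} {B : tsp n × tsp n → tsp n}
    (he : ∀ w x y, B (wAct w x, wAct w y) = wAct w (B (x, y)))
    (s : Equiv.Perm (Fin n)) (a c : tprime n) :
    (B ((0, permAct s a), (0, permAct s c))).2 = permAct s ((B ((0, a), (0, c))).2) := by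
  have h := he ((1 : Equiv.Perm (Fin n)), s) (0, a) (0, c)
  rw [show wAct ((1 : Equiv.Perm (Fin n)), s) ((0 : tprime n), a) = (0, permAct s a) from by
        simp [wAct, permAct_zero, permAct_one],
      show wAct ((1 : Equiv.Perm (Fin n)), s) ((0 : tprime n), c) = (0, permAct s c) from by
        simp [wAct, permAct_zero, permAct_one]] at h
  exact congrArg Prod.snd h

lemma B_eq_zero {n : ℕ} (hn : 2 ≤ n) {B : tsp n × tsp n → tsp n} (hB : IsSymmBilWEquiv n B)
    (h1 : ∀ i j : Fin n, i ≠ j → (B ((vv i j, 0), (vv i j, 0))).1 = 0)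
    (h2 : ∀ i j : Fin n, i ≠ j → (B ((0, vv i j), (0, vv i j))).2 = 0) :
    ∀ p, B p = 0 := by
  obtain ⟨hs, hal, hsl, har, hsr, he⟩ := hB
  have hn1 : 1 ≤ n := by omega
  set o : Fin n := ⟨0, by omega⟩ with ho
  have hz1 : ∀ y, B (0, y) = 0 := fun y => by simpa using hsl 0 0 y
  have hneg_l : ∀ x y, B (-x, y) = -B (x, y) := by
    intro x y
    have hadd : B (x + -x, y) = B (x, y) + B (-x, y) := hal x (-x) y
    rw [add_neg_cancel, hz1 y] at hadd
    exact eq_neg_of_add_eq_zero_right hadd.symm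
  have hneg_r : ∀ x y, B (x, -y) = -B (x, y) := by
    intro x y
    rw [hs, hneg_l, hs]
  -- wrong components vanish by invariance
  have seceq : ∀ a c : tprime n, (B ((a, 0), (c, 0))).2 = 0 := by
    intro a c
    refine invariant_eq_zero hn1 _ (fun s => ?_)
    have h := he ((1 : Equiv.Perm (Fin n)), s) (a, 0) (c, 0)
    rw [show wAct ((1 : Equiv.Perm (Fin n)), s) (a, (0 : tprime n)) = (a, 0) from by
          simp [wAct, permAct_zero, permAct_one],
        show wAct ((1 : Equiv.Perm (Fin n)), s) (c, (0 : tprime n)) = (c, 0) from by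
          simp [wAct, permAct_zero, permAct_one]] at h
    exact (congrArg Prod.snd h).symm
  have fsteq : ∀ a c : tprime n, (B ((0, a), (0, c))).1 = 0 := by
    intro a c
    refine invariant_eq_zero hn1 _ (fun s => ?_)
    have h := he (s, (1 : Equiv.Perm (Fin n))) (0, a) (0, c)
    rw [show wAct (s, (1 : Equiv.Perm (Fin n))) ((0 : tprime n), a) = (0, a) from by
          simp [wAct, permAct_zero, permAct_one],
        show wAct (s, (1 : Equiv.Perm (Fin n))) ((0 : tprime n), c) = (0, c) from by
          simp [wAct, permAct_zero, permAct_one]] at h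
    exact (congrArg Prod.fst h).symm
  -- cross terms vanish
  have cross1 : ∀ a d : tprime n, B ((a, 0), (0, d)) = 0 := by
    intro a d
    have hc2 : ∀ a : tprime n, (B ((a, 0), (0, d))).2 = 0 := by
      have hvv : ∀ i j : Fin n, i ≠ j → (B ((vv i j, 0), (0, d))).2 = 0 := by
        intro i j hij
        have h := he (Equiv.swap i j, (1 : Equiv.Perm (Fin n))) (vv i j, 0) (0, d)
        rw [show wAct (Equiv.swap i j, (1 : Equiv.Perm (Fin n))) ((vv i j : tprime n), (0 : tprime n))
              = (vv j i, 0) from by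
                simp [wAct, permAct_vv, permAct_zero, Equiv.swap_apply_left, Equiv.swap_apply_right],
            show wAct (Equiv.swap i j, (1 : Equiv.Perm (Fin n))) ((0 : tprime n), d) = (0, d) from by
                simp [wAct, permAct_zero, permAct_one]] at h
        have h2 := congrArg Prod.snd h
        rw [vv_neg] at h2
        have h3 : B ((-vv i j, (0 : tprime n)), ((0 : tprime n), d))
            = -B ((vv i j, 0), (0, d)) := by
          rw [show ((-vv i j : tprime n), (0 : tprime n)) = -((vv i j : tprime n), (0 : tprime n))
              from by rw [Prod.neg_mk, neg_zero]]
          exact hneg_l _ _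
        rw [h3] at h2
        have h4 : -((B ((vv i j, (0:tprime n)), ((0:tprime n), d))).2)
            = (B ((vv i j, (0:tprime n)), ((0:tprime n), d))).2 := by
          simpa [wAct, permAct_one] using h2
        have h5 : (2 : ℂ) • (B ((vv i j, (0:tprime n)), ((0:tprime n), d))).2 = 0 := by
          rw [two_smul]
          nth_rewrite 1 [← h4]
          exact neg_add_cancel _
        exact (smul_eq_zero.mp h5).resolve_left two_ne_zero
      intro a
      let L : tprime n →ₗ[ℂ] tprime n :=
        { toFun := fun z => (B ((z, 0), (0, d))).2
          map_add' := fun u v => by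
            have := hal (u, (0:tprime n)) (v, 0) (0, d)
            simpa using congrArg Prod.snd this
          map_smul' := fun m u => by
            have := hsl m (u, (0:tprime n)) ((0:tprime n), d)
            simpa using congrArg Prod.snd this }
      have hL : (B ((a, 0), (0, d))).2 = L a := rfl
      rw [hL, tprime_span o a, map_sum]
      refine Finset.sum_eq_zero (fun i hi => ?_)
      rw [map_smul]
      have hio : i ≠ o := (Finset.mem_erase.mp hi).1
      have : L (vv i o) = 0 := hvv i o hio
      rw [this, smul_zero]
    have hc1 : ∀ d : tprime n, (B ((a, 0), (0, d))).1 = 0 := by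
      have hvv : ∀ i j : Fin n, i ≠ j → (B ((a, 0), (0, vv i j))).1 = 0 := by
        intro i j hij
        have h := he ((1 : Equiv.Perm (Fin n)), Equiv.swap i j) (a, 0) (0, vv i j)
        rw [show wAct ((1 : Equiv.Perm (Fin n)), Equiv.swap i j) (a, (0 : tprime n)) = (a, 0) from by
                simp [wAct, permAct_zero, permAct_one],
            show wAct ((1 : Equiv.Perm (Fin n)), Equiv.swap i j) ((0 : tprime n), (vv i j : tprime n))
              = (0, vv j i) from by
                simp [wAct, permAct_vv, permAct_zero, Equiv.swap_apply_left, Equiv.swap_apply_right]] at h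
        have h2 := congrArg Prod.fst h
        rw [vv_neg] at h2
        have h3 : B ((a, (0 : tprime n)), ((0 : tprime n), -vv i j))
            = -B ((a, 0), (0, vv i j)) := by
          rw [show ((0 : tprime n), (-vv i j : tprime n)) = -(((0 : tprime n), (vv i j : tprime n)))
              from by rw [Prod.neg_mk, neg_zero]]
          exact hneg_r _ _
        rw [h3] at h2
        have h4 : -((B ((a, (0:tprime n)), ((0:tprime n), vv i j))).1)
            = (B ((a, (0:tprime n)), ((0:tprime n), vv i j))).1 := by
          simpa [wAct, permAct_one] using h2
        have h5 : (2 : ℂ) • (B ((a, (0:tprime n)), ((0:tprime n), vv i j))).1 = 0 := by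
          rw [two_smul]
          nth_rewrite 1 [← h4]
          exact neg_add_cancel _
        exact (smul_eq_zero.mp h5).resolve_left two_ne_zero
      intro d
      let L : tprime n →ₗ[ℂ] tprime n :=
        { toFun := fun z => (B ((a, 0), (0, z))).1
          map_add' := fun u v => by
            have := har (a, (0:tprime n)) ((0:tprime n), u) (0, v)
            simpa using congrArg Prod.fst this
          map_smul' := fun m u => by
            have := hsr m (a, (0:tprime n)) ((0:tprime n), u)
            simpa using congrArg Prod.fst this }
      have hL : (B ((a, 0), (0, d))).1 = L d := rfl
      rw [hL, tprime_span o d, map_sum]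
      refine Finset.sum_eq_zero (fun i hi => ?_)
      rw [map_smul]
      have hio : i ≠ o := (Finset.mem_erase.mp hi).1
      have : L (vv i o) = 0 := hvv i o hio
      rw [this, smul_zero]
    exact Prod.ext (hc1 d) (hc2 a)
  have cross2 : ∀ b c : tprime n, B ((0, b), (c, 0)) = 0 :=
    fun b c => (hs _ _).trans (cross1 c b)
  -- diagonal pieces via the core lemma
  have diag1 : ∀ a c : tprime n, B ((a, 0), (c, 0)) = 0 := by
    intro a c
    have hfst : (B ((a, 0), (c, 0))).1 = 0 := by
      refine core hn (fun u v => (B ((u, 0), (v, 0))).1) ?_ ?_ ?_ h1 a c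
      · intro u v; exact congrArg Prod.fst (hs (u, 0) (v, 0))
      · intro u u' v; simpa using congrArg Prod.fst (hal (u, (0:tprime n)) (u', 0) (v, 0))
      · intro m u v; simpa using congrArg Prod.fst (hsl m (u, (0:tprime n)) (v, (0:tprime n)))
    exact Prod.ext hfst (seceq a c)
  have diag2 : ∀ b d : tprime n, B ((0, b), (0, d)) = 0 := by
    intro b d
    have hsnd : (B ((0, b), (0, d))).2 = 0 := by
      refine core hn (fun u v => (B ((0, u), (0, v))).2) ?_ ?_ ?_ h2 b d
      · intro u v; exact congrArg Prod.snd (hs (0, u) (0, v))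
      · intro u u' v; simpa using congrArg Prod.snd (hal ((0:tprime n), u) (0, u') (0, v))
      · intro m u v; simpa using congrArg Prod.snd (hsl m ((0:tprime n), u) ((0:tprime n), v))
    exact Prod.ext (fsteq b d) hsnd
  -- assemble
  rintro ⟨x, y⟩
  have hx : (x, y) = (((x.1, (0:tprime n)) + ((0:tprime n), x.2)),
      ((y.1, (0:tprime n)) + ((0:tprime n), y.2))) := by simp
  rw [hx, hal, har, har, diag1, cross1, cross2, diag2]
  simp

/-! ### The generator `mmul` -/

noncomputable def mmul {n : ℕ} (u v : tprime n) : tprime n :=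
  ⟨fun k => (u : Fin n → ℂ) k * (v : Fin n → ℂ) k
      - (∑ j, (u : Fin n → ℂ) j * (v : Fin n → ℂ) j) / n, by
    show ∑ k : Fin n, ((u : Fin n → ℂ) k * (v : Fin n → ℂ) k
        - (∑ j, (u : Fin n → ℂ) j * (v : Fin n → ℂ) j) / n) = 0
    rw [Finset.sum_sub_distrib, Finset.sum_const, Finset.card_univ, Fintype.card_fin,
      nsmul_eq_mul]
    rcases Nat.eq_zero_or_pos n with h | h
    · subst h; simp
    · have hne : (n : ℂ) ≠ 0 := Nat.cast_ne_zero.mpr h.ne'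
      rw [mul_div_cancel₀ _ hne, sub_self]⟩

lemma coe_mmul {n : ℕ} (u v : tprime n) (k : Fin n) :
    (mmul u v : Fin n → ℂ) k = (u : Fin n → ℂ) k * (v : Fin n → ℂ) k
      - (∑ j, (u : Fin n → ℂ) j * (v : Fin n → ℂ) j) / n := rfl

lemma mmul_comm {n : ℕ} (u v : tprime n) : mmul u v = mmul v u := by
  apply Subtype.ext; funext k
  rw [coe_mmul, coe_mmul, mul_comm]
  congr 2
  exact Finset.sum_congr rfl fun j _ => mul_comm _ _

lemma mmul_add_left {n : ℕ} (a b c : tprime n) : mmul (a + b) c = mmul a c + mmul b c := by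
  apply Subtype.ext; funext k
  have hsum : ∑ j, ((a : Fin n → ℂ) j + (b : Fin n → ℂ) j) * (c : Fin n → ℂ) j
      = (∑ j, (a : Fin n → ℂ) j * (c : Fin n → ℂ) j)
        + ∑ j, (b : Fin n → ℂ) j * (c : Fin n → ℂ) j := by
    rw [← Finset.sum_add_distrib]; exact Finset.sum_congr rfl fun j _ => by ring
  show ((a : Fin n → ℂ) k + (b : Fin n → ℂ) k) * (c : Fin n → ℂ) k
      - (∑ j, ((a : Fin n → ℂ) j + (b : Fin n → ℂ) j) * (c : Fin n → ℂ) j) / n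
      = (mmul a c : Fin n → ℂ) k + (mmul b c : Fin n → ℂ) k
  rw [hsum, coe_mmul, coe_mmul]; ring

lemma mmul_smul_left {n : ℕ} (m : ℂ) (a c : tprime n) : mmul (m • a) c = m • mmul a c := by
  apply Subtype.ext; funext k
  have hsum : ∑ j, (m * (a : Fin n → ℂ) j) * (c : Fin n → ℂ) j
      = m * ∑ j, (a : Fin n → ℂ) j * (c : Fin n → ℂ) j := by
    rw [Finset.mul_sum]; exact Finset.sum_congr rfl fun j _ => by ring
  show (m * (a : Fin n → ℂ) k) * (c : Fin n → ℂ) k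
      - (∑ j, (m * (a : Fin n → ℂ) j) * (c : Fin n → ℂ) j) / n
      = m * (mmul a c : Fin n → ℂ) k
  rw [hsum, coe_mmul]; ring

lemma mmul_perm {n : ℕ} (s : Equiv.Perm (Fin n)) (u v : tprime n) :
    mmul (permAct s u) (permAct s v) = permAct s (mmul u v) := by
  apply Subtype.ext; funext k
  show (u : Fin n → ℂ) (s⁻¹ k) * (v : Fin n → ℂ) (s⁻¹ k)
      - (∑ j, (u : Fin n → ℂ) (s⁻¹ j) * (v : Fin n → ℂ) (s⁻¹ j)) / n
      = (u : Fin n → ℂ) (s⁻¹ k) * (v : Fin n → ℂ) (s⁻¹ k)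
      - (∑ j, (u : Fin n → ℂ) j * (v : Fin n → ℂ) j) / n
  congr 2
  exact Equiv.sum_comp (s⁻¹ : Equiv.Perm (Fin n)) (fun j => (u : Fin n → ℂ) j * (v : Fin n → ℂ) j)

/-- First generator: `B₁((a,b),(c,d)) = (mmul a c, 0)`. -/
noncomputable def Bgen1 (n : ℕ) : tsp n × tsp n → tsp n := fun p => (mmul p.1.1 p.2.1, 0)

/-- Second generator: `B₂((a,b),(c,d)) = (0, mmul b d)`. -/
noncomputable def Bgen2 (n : ℕ) : tsp n × tsp n → tsp n := fun p => (0, mmul p.1.2 p.2.2)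

lemma Bgen1_mem (n : ℕ) : Bgen1 n ∈ WEquivBilSpace n := by
  refine ⟨fun x y => ?_, fun x x' y => ?_, fun c x y => ?_, fun x y y' => ?_,
    fun c x y => ?_, fun w x y => ?_⟩
  · show (mmul x.1 y.1, (0:tprime n)) = (mmul y.1 x.1, (0:tprime n))
    rw [mmul_comm]
  · show (mmul (x + x').1 y.1, (0:tprime n)) = (mmul x.1 y.1, (0:tprime n)) + (mmul x'.1 y.1, 0)
    rw [Prod.fst_add, mmul_add_left, Prod.mk_add_mk, add_zero]
  · show (mmul (c • x).1 y.1, (0:tprime n)) = c • (mmul x.1 y.1, (0:tprime n))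
    rw [Prod.smul_fst, mmul_smul_left, Prod.smul_mk, smul_zero]
  · show (mmul x.1 (y + y').1, (0:tprime n)) = (mmul x.1 y.1, (0:tprime n)) + (mmul x.1 y'.1, 0)
    rw [Prod.fst_add, mmul_comm, mmul_add_left, Prod.mk_add_mk, add_zero,
      mmul_comm y.1, mmul_comm y'.1]
  · show (mmul x.1 (c • y).1, (0:tprime n)) = c • (mmul x.1 y.1, (0:tprime n))
    rw [Prod.smul_fst, mmul_comm, mmul_smul_left, Prod.smul_mk, smul_zero, mmul_comm y.1]
  · show (mmul (permAct w.1 x.1) (permAct w.1 y.1), (0:tprime n))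
        = wAct w (mmul x.1 y.1, (0:tprime n))
    rw [mmul_perm]
    show _ = (permAct w.1 (mmul x.1 y.1), permAct w.2 0)
    rw [permAct_zero]

lemma Bgen2_mem (n : ℕ) : Bgen2 n ∈ WEquivBilSpace n := by
  refine ⟨fun x y => ?_, fun x x' y => ?_, fun c x y => ?_, fun x y y' => ?_,
    fun c x y => ?_, fun w x y => ?_⟩
  · show ((0:tprime n), mmul x.2 y.2) = ((0:tprime n), mmul y.2 x.2)
    rw [mmul_comm]
  · show ((0:tprime n), mmul (x + x').2 y.2) = ((0:tprime n), mmul x.2 y.2) + (0, mmul x'.2 y.2)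
    rw [Prod.snd_add, mmul_add_left, Prod.mk_add_mk, add_zero]
  · show ((0:tprime n), mmul (c • x).2 y.2) = c • ((0:tprime n), mmul x.2 y.2)
    rw [Prod.smul_snd, mmul_smul_left, Prod.smul_mk, smul_zero]
  · show ((0:tprime n), mmul x.2 (y + y').2) = ((0:tprime n), mmul x.2 y.2) + (0, mmul x.2 y'.2)
    rw [Prod.snd_add, mmul_comm, mmul_add_left, Prod.mk_add_mk, add_zero,
      mmul_comm y.2, mmul_comm y'.2]
  · show ((0:tprime n), mmul x.2 (c • y).2) = c • ((0:tprime n), mmul x.2 y.2)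
    rw [Prod.smul_snd, mmul_comm, mmul_smul_left, Prod.smul_mk, smul_zero, mmul_comm y.2]
  · show ((0:tprime n), mmul (permAct w.2 x.2) (permAct w.2 y.2))
        = wAct w ((0:tprime n), mmul x.2 y.2)
    rw [mmul_perm]
    show _ = (permAct w.1 0, permAct w.2 (mmul x.2 y.2))
    rw [permAct_zero]

/-! ### Diagonal invariance lemmas -/

lemma diag_swap_fst {n : ℕ} {B : tsp n × tsp n → tsp n} (hB : IsSymmBilWEquiv n B)
    (i j : Fin n) :
    permAct (Equiv.swap i j) ((B ((vv i j, 0), (vv i j, 0))).1)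
      = (B ((vv i j, 0), (vv i j, 0))).1 := by
  obtain ⟨hs, hal, hsl, har, hsr, he⟩ := hB
  have hz1 : ∀ y, B (0, y) = 0 := fun y => by simpa using hsl 0 0 y
  have hneg_l : ∀ x y, B (-x, y) = -B (x, y) := by
    intro x y
    have hadd : B (x + -x, y) = B (x, y) + B (-x, y) := hal x (-x) y
    rw [add_neg_cancel, hz1 y] at hadd
    exact eq_neg_of_add_eq_zero_right hadd.symm
  have hneg_r : ∀ x y, B (x, -y) = -B (x, y) := fun x y => by rw [hs, hneg_l, hs]
  have ht := transport_fst he (Equiv.swap i j) (vv i j) (vv i j)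
  rw [permAct_vv, Equiv.swap_apply_left, Equiv.swap_apply_right, vv_neg,
    show ((-vv i j : tprime n), (0:tprime n)) = -((vv i j : tprime n), (0:tprime n)) from by
      rw [Prod.neg_mk, neg_zero], hneg_l, hneg_r, neg_neg] at ht
  exact ht.symm

lemma diag_swap_snd {n : ℕ} {B : tsp n × tsp n → tsp n} (hB : IsSymmBilWEquiv n B)
    (i j : Fin n) :
    permAct (Equiv.swap i j) ((B ((0, vv i j), (0, vv i j))).2)
      = (B ((0, vv i j), (0, vv i j))).2 := by
  obtain ⟨hs, hal, hsl, har, hsr, he⟩ := hB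
  have hz1 : ∀ y, B (0, y) = 0 := fun y => by simpa using hsl 0 0 y
  have hneg_l : ∀ x y, B (-x, y) = -B (x, y) := by
    intro x y
    have hadd : B (x + -x, y) = B (x, y) + B (-x, y) := hal x (-x) y
    rw [add_neg_cancel, hz1 y] at hadd
    exact eq_neg_of_add_eq_zero_right hadd.symm
  have hneg_r : ∀ x y, B (x, -y) = -B (x, y) := fun x y => by rw [hs, hneg_l, hs]
  have ht := transport_snd he (Equiv.swap i j) (vv i j) (vv i j)
  rw [permAct_vv, Equiv.swap_apply_left, Equiv.swap_apply_right, vv_neg,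
    show ((0:tprime n), (-vv i j : tprime n)) = -(((0:tprime n), (vv i j : tprime n))) from by
      rw [Prod.neg_mk, neg_zero], hneg_l, hneg_r, neg_neg] at ht
  exact ht.symm

/-! ### The `n ≥ 3` computation -/

set_option maxHeartbeats 1000000
set_option synthInstance.maxHeartbeats 1000000

lemma finrank_ge3 {n : ℕ} (hn : 2 ≤ n) (z0 z1 z2 : Fin n)
    (h01 : z0 ≠ z1) (h02 : z0 ≠ z2) (h12 : z1 ≠ z2) :
    Module.finrank ℂ (WEquivBilSpace n) = 2 := by
  set v : tprime n := vv z0 z1 with hvdef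
  let Φ : WEquivBilSpace n →ₗ[ℂ] ℂ × ℂ :=
    { toFun := fun B =>
        ((B.val ((v, 0), (v, 0))).1.val z0 - (B.val ((v, 0), (v, 0))).1.val z2,
         (B.val ((0, v), (0, v))).2.val z0 - (B.val ((0, v), (0, v))).2.val z2)
      map_add' := fun B C => by
        refine Prod.ext ?_ ?_
        · show ((B.val ((v,0),(v,0))).1.val z0 + (C.val ((v,0),(v,0))).1.val z0)
              - ((B.val ((v,0),(v,0))).1.val z2 + (C.val ((v,0),(v,0))).1.val z2)
            = ((B.val ((v,0),(v,0))).1.val z0 - (B.val ((v,0),(v,0))).1.val z2)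
              + ((C.val ((v,0),(v,0))).1.val z0 - (C.val ((v,0),(v,0))).1.val z2)
          ring
        · show ((B.val ((0,v),(0,v))).2.val z0 + (C.val ((0,v),(0,v))).2.val z0)
              - ((B.val ((0,v),(0,v))).2.val z2 + (C.val ((0,v),(0,v))).2.val z2)
            = ((B.val ((0,v),(0,v))).2.val z0 - (B.val ((0,v),(0,v))).2.val z2)
              + ((C.val ((0,v),(0,v))).2.val z0 - (C.val ((0,v),(0,v))).2.val z2)
          ring
      map_smul' := fun m B => by
        refine Prod.ext ?_ ?_
        · show (m * (B.val ((v,0),(v,0))).1.val z0) - (m * (B.val ((v,0),(v,0))).1.val z2)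
            = m * ((B.val ((v,0),(v,0))).1.val z0 - (B.val ((v,0),(v,0))).1.val z2)
          ring
        · show (m * (B.val ((0,v),(0,v))).2.val z0) - (m * (B.val ((0,v),(0,v))).2.val z2)
            = m * ((B.val ((0,v),(0,v))).2.val z0 - (B.val ((0,v),(0,v))).2.val z2)
          ring }
  have hv0 : (v : Fin n → ℂ) z0 = 1 := by
    rw [hvdef, coe_vv, if_pos rfl, if_neg h01, sub_zero]
  have hv2 : (v : Fin n → ℂ) z2 = 0 := by
    rw [hvdef, coe_vv, if_neg (Ne.symm h02), if_neg (Ne.symm h12), sub_zero]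
  have hS : ∑ j, (v : Fin n → ℂ) j * (v : Fin n → ℂ) j = 2 := by
    have hterm : ∀ j, (v : Fin n → ℂ) j * (v : Fin n → ℂ) j
        = (if j = z0 then 1 else 0) + (if j = z1 then 1 else 0) := by
      intro j
      rw [hvdef, coe_vv]
      by_cases hj0 : j = z0
      · have hj1 : j ≠ z1 := fun h => h01 (hj0.symm.trans h)
        simp [hj0, hj1, h01]
      · by_cases hj1 : j = z1
        · simp [hj0, hj1, Ne.symm h01]
        · simp [hj0, hj1]
    rw [Finset.sum_congr rfl (fun j _ => hterm j), Finset.sum_add_distrib]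
    simp
    norm_num
  have hΦ1 : Φ ⟨Bgen1 n, Bgen1_mem n⟩ = (1, 0) := by
    refine Prod.ext ?_ ?_
    · show (mmul v v : Fin n → ℂ) z0 - (mmul v v : Fin n → ℂ) z2 = 1
      rw [coe_mmul, coe_mmul, hS, hv0, hv2]
      ring
    · show ((0:tprime n) : Fin n → ℂ) z0 - ((0:tprime n) : Fin n → ℂ) z2 = 0
      simp
  have hΦ2 : Φ ⟨Bgen2 n, Bgen2_mem n⟩ = (0, 1) := by
    refine Prod.ext ?_ ?_
    · show ((0:tprime n) : Fin n → ℂ) z0 - ((0:tprime n) : Fin n → ℂ) z2 = 0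
      simp
    · show (mmul v v : Fin n → ℂ) z0 - (mmul v v : Fin n → ℂ) z2 = 1
      rw [coe_mmul, coe_mmul, hS, hv0, hv2]
      ring
  have hsurj : Function.Surjective Φ := by
    rintro ⟨u1, u2⟩
    refine ⟨u1 • ⟨Bgen1 n, Bgen1_mem n⟩ + u2 • ⟨Bgen2 n, Bgen2_mem n⟩, ?_⟩
    rw [map_add, map_smul, map_smul, hΦ1, hΦ2]
    show (u1 • ((1:ℂ), (0:ℂ))) + (u2 • ((0:ℂ), (1:ℂ))) = (u1, u2)
    rw [Prod.smul_mk, Prod.smul_mk, Prod.mk_add_mk]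
    simp
  have hinj : Function.Injective Φ := by
    rw [injective_iff_map_eq_zero]
    intro B hB0
    obtain ⟨hs, hal, hsl, har, hsr, he⟩ := B.2
    -- first diagonal piece vanishes
    have hc1 : (B.val ((v, 0), (v, 0))).1.val z0 - (B.val ((v, 0), (v, 0))).1.val z2 = 0 :=
      congrArg Prod.fst hB0
    have hc2 : (B.val ((0, v), (0, v))).2.val z0 - (B.val ((0, v), (0, v))).2.val z2 = 0 :=
      congrArg Prod.snd hB0
    have key1 : (B.val ((v, 0), (v, 0))).1 = 0 := by
      set zB := (B.val ((v, 0), (v, 0))).1 with hzb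
      have hswap : permAct (Equiv.swap z0 z1) zB = zB := diag_swap_fst B.2 z0 z1
      have hval10 : zB.val z1 = zB.val z0 := by
        have hh := congrFun (congrArg Subtype.val hswap) z0
        rw [coe_permAct, Equiv.swap_inv, Equiv.swap_apply_left] at hh
        exact hh
      have hfix : ∀ i j : Fin n, i ≠ z0 → i ≠ z1 → j ≠ z0 → j ≠ z1 →
          zB.val j = zB.val i := by
        intro i j hi0 hi1 hj0 hj1
        have hsv : permAct (Equiv.swap i j) v = v := by
          rw [hvdef, permAct_vv, Equiv.swap_apply_of_ne_of_ne (Ne.symm hi0) (Ne.symm hj0),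
            Equiv.swap_apply_of_ne_of_ne (Ne.symm hi1) (Ne.symm hj1)]
        have ht := transport_fst he (Equiv.swap i j) v v
        rw [hsv] at ht
        have hh := congrFun (congrArg Subtype.val ht.symm) i
        rw [coe_permAct, Equiv.swap_inv, Equiv.swap_apply_left] at hh
        exact hh
      have hall : ∀ k, zB.val k = zB.val z0 := by
        intro k
        by_cases hk0 : k = z0
        · rw [hk0]
        · by_cases hk1 : k = z1
          · rw [hk1]; exact hval10
          · by_cases hk2 : k = z2
            · rw [hk2]; exact (sub_eq_zero.mp hc1).symm
            · have h1 : zB.val k = zB.val z2 :=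
                (hfix k z2 hk0 hk1 (Ne.symm h02) (Ne.symm h12)).symm
              rw [h1]; exact (sub_eq_zero.mp hc1).symm
      exact allEq_zero (by omega) zB z0 hall
    have key2 : (B.val ((0, v), (0, v))).2 = 0 := by
      set zB := (B.val ((0, v), (0, v))).2 with hzb
      have hswap : permAct (Equiv.swap z0 z1) zB = zB := diag_swap_snd B.2 z0 z1
      have hval10 : zB.val z1 = zB.val z0 := by
        have hh := congrFun (congrArg Subtype.val hswap) z0
        rw [coe_permAct, Equiv.swap_inv, Equiv.swap_apply_left] at hh
        exact hh
      have hfix : ∀ i j : Fin n, i ≠ z0 → i ≠ z1 → j ≠ z0 → j ≠ z1 →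
          zB.val j = zB.val i := by
        intro i j hi0 hi1 hj0 hj1
        have hsv : permAct (Equiv.swap i j) v = v := by
          rw [hvdef, permAct_vv, Equiv.swap_apply_of_ne_of_ne (Ne.symm hi0) (Ne.symm hj0),
            Equiv.swap_apply_of_ne_of_ne (Ne.symm hi1) (Ne.symm hj1)]
        have ht := transport_snd he (Equiv.swap i j) v v
        rw [hsv] at ht
        have hh := congrFun (congrArg Subtype.val ht.symm) i
        rw [coe_permAct, Equiv.swap_inv, Equiv.swap_apply_left] at hh
        exact hh
      have hall : ∀ k, zB.val k = zB.val z0 := by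
        intro k
        by_cases hk0 : k = z0
        · rw [hk0]
        · by_cases hk1 : k = z1
          · rw [hk1]; exact hval10
          · by_cases hk2 : k = z2
            · rw [hk2]; exact (sub_eq_zero.mp hc2).symm
            · have h1 : zB.val k = zB.val z2 :=
                (hfix k z2 hk0 hk1 (Ne.symm h02) (Ne.symm h12)).symm
              rw [h1]; exact (sub_eq_zero.mp hc2).symm
      exact allEq_zero (by omega) zB z0 hall
    have h1' : ∀ i j : Fin n, i ≠ j → (B.val ((vv i j, 0), (vv i j, 0))).1 = 0 := by
      intro i j hij
      obtain ⟨s, hs0, hs1⟩ := exists_perm_pair_s1 hij z0 z1 h01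
      have ht := transport_fst he s v v
      rw [hvdef, permAct_vv, hs0, hs1] at ht
      rw [ht, ← hvdef, key1, permAct_zero]
    have h2' : ∀ i j : Fin n, i ≠ j → (B.val ((0, vv i j), (0, vv i j))).2 = 0 := by
      intro i j hij
      obtain ⟨s, hs0, hs1⟩ := exists_perm_pair_s1 hij z0 z1 h01
      have ht := transport_snd he s v v
      rw [hvdef, permAct_vv, hs0, hs1] at ht
      rw [ht, ← hvdef, key2, permAct_zero]
    apply Subtype.ext
    funext p
    exact B_eq_zero hn B.2 h1' h2' p
  have e := LinearEquiv.ofBijective Φ ⟨hinj, hsurj⟩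
  rw [e.finrank_eq, Module.finrank_prod, Module.finrank_self]

/-! ### The `n = 2` case -/

lemma wequiv_bot : WEquivBilSpace 2 = ⊥ := by
  rw [eq_bot_iff]
  intro B hB
  rw [Submodule.mem_bot]
  have hB' : IsSymmBilWEquiv 2 B := hB
  have hfin : ∀ (i j k : Fin 2), i ≠ j → k = i ∨ k = j := by
    intro i j k hij
    have hi := i.2; have hj := j.2; have hk2 := k.2
    have hv : i.val ≠ j.val := fun h => hij (Fin.ext h)
    have hvk : k.val = i.val ∨ k.val = j.val := by omega
    rcases hvk with h | h
    · exact Or.inl (Fin.ext h)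
    · exact Or.inr (Fin.ext h)
  have h1' : ∀ i j : Fin 2, i ≠ j → (B ((vv i j, 0), (vv i j, 0))).1 = 0 := by
    intro i j hij
    have hswap := diag_swap_fst hB' i j
    refine allEq_zero (by norm_num) _ i (fun k => ?_)
    have hh := congrFun (congrArg Subtype.val hswap) i
    rw [coe_permAct, Equiv.swap_inv, Equiv.swap_apply_left] at hh
    rcases hfin i j k hij with rfl | rfl
    · rfl
    · exact hh
  have h2' : ∀ i j : Fin 2, i ≠ j → (B ((0, vv i j), (0, vv i j))).2 = 0 := by
    intro i j hij
    have hswap := diag_swap_snd hB' i j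
    refine allEq_zero (by norm_num) _ i (fun k => ?_)
    have hh := congrFun (congrArg Subtype.val hswap) i
    rw [coe_permAct, Equiv.swap_inv, Equiv.swap_apply_left] at hh
    rcases hfin i j k hij with rfl | rfl
    · rfl
    · exact hh
  funext p
  exact B_eq_zero (le_refl 2) hB' h1' h2' p

/-- For `n ≥ 2`, the complex vector space of symmetric ℂ-bilinear
`S_n × S_n`-equivariant maps `t × t → t`, where `t = t' ⊕ t'` and `t'` is the sum-zero
hyperplane in `ℂⁿ`, has dimension `0` if `n = 2` and `2` if `n ≥ 3`. -/
theorem dim_weyl_equivariant_symmetric_bilinear (n : ℕ) (hn : 2 ≤ n) :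
    Module.finrank ℂ (WEquivBilSpace n) = if n = 2 then 0 else 2 := by
  by_cases h2 : n = 2
  · rw [if_pos h2]; subst h2
    rw [wequiv_bot, finrank_bot]
  · rw [if_neg h2]
    have hn3 : 3 ≤ n := by omega
    refine finrank_ge3 hn ⟨0, by omega⟩ ⟨1, by omega⟩ ⟨2, by omega⟩ ?_ ?_ ?_
    · intro h; simp only [Fin.mk.injEq] at h; omega
    · intro h; simp only [Fin.mk.injEq] at h; omega
    · intro h; simp only [Fin.mk.injEq] at h; omega
end

section
/- Let n ≥ 3 be odd and let Ψ := ψ₁ + ψ₂ on g = su(n) ⊕ su(n). If x ∈ g satisfies Ψ(x,x) = 0, then x = 0. -/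
open Matrix

lemma trace_toLin' {n : ℕ} (P : Mat n) :
    LinearMap.trace ℂ (Fin n → ℂ) (Matrix.toLin' P) = P.trace := by
  rw [LinearMap.trace_eq_matrix_trace ℂ (Pi.basisFun ℂ (Fin n)),
    LinearMap.toMatrix_eq_toMatrix', LinearMap.toMatrix'_toLin']

lemma key_lemma {n : ℕ} (hn : 3 ≤ n) (hodd : Odd n) {X : Mat n}
    (h1 : Xᴴ = -X) (h2 : X.trace = 0) (h : psiMat n X X = 0) : X = 0 := by
  have hn0 : (n : ℂ) ≠ 0 := Nat.cast_ne_zero.mpr (by omega)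
  set d : ℂ := (X * X).trace / n with hd
  have hXX : X * X = d • 1 := by
    have hI : (Complex.I : ℂ) ≠ 0 := Complex.I_ne_zero
    rw [psiMat, smul_eq_zero] at h
    rcases h with h | h; · exact absurd h hI
    have h' : X * X + X * X = (((X * X + X * X).trace) / n) • 1 := by
      linear_combination (norm := abel) h
    have htr : (X * X + X * X).trace = 2 * (X * X).trace := by
      rw [trace_add]; ring
    rw [htr] at h'
    have : (2 : ℂ) • (X * X) = (2 : ℂ) • (d • 1) := by
      rw [smul_smul, two_smul]
      rw [h', hd]
      congr 1
      ring
    exact smul_right_injective (Mat n) (two_ne_zero) this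
  rcases eq_or_ne d 0 with hd0 | hd0
  · have hz : Xᴴ * X = 0 := by rw [h1, Matrix.neg_mul, hXX, hd0, zero_smul, neg_zero]
    open ComplexOrder in
    exact Matrix.conjTranspose_mul_self_eq_zero.mp hz
  · obtain ⟨w, hw⟩ := IsAlgClosed.exists_pow_nat_eq d (n := 2) (by norm_num)
    have hw0 : w ≠ 0 := by rintro rfl; simp at hw; exact hd0 hw.symm
    set M : Mat n := w⁻¹ • X with hM
    have hM2 : M * M = 1 := by
      rw [hM, Matrix.smul_mul, Matrix.mul_smul, hXX, smul_smul, smul_smul]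
      rw [show w⁻¹ * w⁻¹ * d = 1 from by rw [← hw]; field_simp, one_smul]
    have hMtr : M.trace = 0 := by rw [hM, trace_smul, h2, smul_zero]
    set P : Mat n := (2 : ℂ)⁻¹ • (1 + M) with hP
    have hPP : P * P = P := by
      rw [hP, Matrix.smul_mul, Matrix.mul_smul, smul_smul, Matrix.add_mul, Matrix.mul_add,
        Matrix.mul_add, Matrix.one_mul, Matrix.mul_one, Matrix.one_mul, hM2]
      rw [show (1 : Mat n) + M + (M + 1) = (2:ℂ) • (1 + M) by
        rw [two_smul]; abel]
      rw [smul_smul]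
      norm_num
    have hPtr : P.trace = n / 2 := by
      rw [hP, trace_smul, trace_add, trace_one, hMtr, add_zero]
      simp [Fintype.card_fin]
      ring
    -- idempotent linear map
    set f := Matrix.toLin' P with hf
    have hff : f ∘ₗ f = f := by
      rw [hf, ← Matrix.toLin'_mul, hPP]
    obtain ⟨p, hp⟩ := (LinearMap.isProj_iff_isIdempotentElem f).mpr hff
    have htr := hp.trace
    rw [trace_toLin', hPtr] at htr
    have : (2 * Module.finrank ℂ p : ℂ) = n := by
      push_cast [← htr]; ring
    have hn2 : 2 * Module.finrank ℂ p = n := by exact_mod_cast this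
    exact absurd hodd (by rw [← hn2]; simp [Nat.even_mul_succ_self, parity_simps])

/-- For odd `n ≥ 3` and `Ψ = ψ₁ + ψ₂` on `g = su(n) ⊕ su(n)`:
if `Ψ(x,x) = 0` then `x = 0`. -/
theorem psi_zero_set_trivial_of_odd (n : ℕ) (hn : 3 ≤ n) (hodd : Odd n) (x : gsu n)
    (hx : (psi1 n + psi2 n) (x, x) = 0) : x = 0 := by
  have hx' := hx
  rw [Pi.add_apply, psi1, psi2, Prod.ext_iff] at hx'
  obtain ⟨ha, hb⟩ := hx'
  have hX : psiMat n x.1.1 x.1.1 = 0 := by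
    have := congrArg Subtype.val ha
    simpa using this
  have hY : psiMat n x.2.1 x.2.1 = 0 := by
    have := congrArg Subtype.val hb
    simpa using this
  have h1 : (x.1 : Mat n) = 0 := key_lemma hn hodd x.1.2.1 x.1.2.2 hX
  have h2 : (x.2 : Mat n) = 0 := key_lemma hn hodd x.2.2.1 x.2.2.2 hY
  exact Prod.ext (Subtype.ext h1) (Subtype.ext h2)
end

section
/- Let n ≥ 2 be even and let Ψ := ψ₁ + ψ₂ on g = su(n) ⊕ su(n). Then for x = (X,Y) ∈ g, Ψ(x,x) = 0 if and only if there exist U, V ∈ SU(n) and a, b ∈ ℝ such that X = a·UΛU⁻¹ and Y = b·VΛV⁻¹; that is, the zero set of x ↦ Ψ(x,x) is the (SU(n) × SU(n))-orbit of the plane spanned by (Λ,0) and (0,Λ). -/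
open Matrix

/-- For even `n`, `Λ ∈ su(n)` is the block-diagonal sum of `n/2` copies of
`[[i,0],[0,−i]]`; equivalently the diagonal matrix whose `j`-th entry is `i` for even `j`
and `−i` for odd `j`. -/
noncomputable def Lambda (n : ℕ) : Mat n :=
  Matrix.diagonal (fun j : Fin n => if (j : ℕ) % 2 = 0 then Complex.I else -Complex.I)

namespace PsiAux
open Matrix

lemma real_smul_eq {n : ℕ} (r : ℝ) (M : Mat n) : r • M = ((r : ℂ)) • M := by
  ext i j
  simp [Matrix.smul_apply, Complex.real_smul]

/-- diagonal entries of `Λ`. -/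
noncomputable def dC (n : ℕ) : Fin n → ℂ :=
  fun j => if (j : ℕ) % 2 = 0 then Complex.I else -Complex.I

lemma Lambda_eq (n : ℕ) : Lambda n = Matrix.diagonal (dC n) := rfl

lemma Lambda_sq (n : ℕ) : Lambda n * Lambda n = -1 := by
  rw [Lambda_eq, diagonal_mul_diagonal]
  have h : ∀ j, dC n j * dC n j = (-1 : ℂ) := by
    intro j
    simp only [dC]
    split_ifs <;> simp [Complex.I_mul_I]
  ext i j
  by_cases hij : i = j
  · subst hij; simp [diagonal_apply_eq, h i]
  · simp [diagonal_apply_ne _ hij, Matrix.one_apply_ne hij]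

lemma conjMat_eq {n : ℕ} (U : SU n) (A : Mat n) :
    conjMat U A = (U : Mat n) * A * star (U : Mat n) := by
  rw [conjMat, SU.inv_coe]

lemma SU.mul_star_self {n : ℕ} (U : SU n) : (U : Mat n) * star (U : Mat n) = 1 :=
  mul_eq_one_comm.mp (SU.star_mul_self U)

lemma conj_sq {n : ℕ} (U : SU n) (a : ℝ) :
    (a • conjMat U (Lambda n)) * (a • conjMat U (Lambda n)) = ((-(a*a) : ℝ) : ℂ) • 1 := by
  rw [real_smul_eq, smul_mul_smul_comm, conjMat_eq]
  have h : ((U : Mat n) * Lambda n * star (U : Mat n)) *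
      ((U : Mat n) * Lambda n * star (U : Mat n)) = -1 := by
    calc ((U : Mat n) * Lambda n * star (U : Mat n)) *
        ((U : Mat n) * Lambda n * star (U : Mat n))
        = (U : Mat n) * Lambda n * ((star (U : Mat n) * (U : Mat n)) * Lambda n)
          * star (U : Mat n) := by
          simp only [Matrix.mul_assoc]
      _ = (U : Mat n) * (Lambda n * Lambda n) * star (U : Mat n) := by
          rw [SU.star_mul_self, Matrix.one_mul]
          simp only [Matrix.mul_assoc]
      _ = -((U : Mat n) * star (U : Mat n)) := by
          rw [Lambda_sq]; simp [Matrix.mul_neg, Matrix.neg_mul]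
      _ = -1 := by rw [SU.mul_star_self]
  rw [h]
  push_cast
  rw [smul_neg, ← neg_smul]

lemma psiMat_self_zero {n : ℕ} (hn : 0 < n) {X : Mat n} {c : ℂ} (h : X * X = c • 1) :
    psiMat n X X = 0 := by
  have hnC : (n : ℂ) ≠ 0 := Nat.cast_ne_zero.mpr hn.ne'
  rw [psiMat, h, ← two_smul ℂ (c • (1 : Mat n)), smul_smul, trace_smul, trace_one]
  simp only [smul_eq_mul, Fintype.card_fin]
  rw [mul_div_assoc, div_self hnC, mul_one, sub_self, smul_zero]

lemma card_even (n : ℕ) (heven : Even n) :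
    Fintype.card {j : Fin n // (j : ℕ) % 2 = 0} = n / 2 := by
  obtain ⟨k, hk⟩ := heven
  have e : {j : Fin n // (j : ℕ) % 2 = 0} ≃ Fin (n / 2) := by
    refine ⟨fun j => ⟨(j.1 : ℕ) / 2, ?_⟩, fun m => ⟨⟨2 * (m : ℕ), ?_⟩, ?_⟩, ?_, ?_⟩
    · have h1 := j.1.2; have h2 := j.2; omega
    · have := m.2; omega
    · simp
    · rintro ⟨⟨j, hj⟩, hp⟩; ext; simp at hp ⊢; omega
    · rintro ⟨m, hm⟩; ext; simp
  rw [Fintype.card_congr e, Fintype.card_fin]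

lemma perm_star {n : ℕ} (σ : Equiv.Perm (Fin n)) :
    star (σ.toPEquiv.toMatrix : Mat n) = σ.symm.toPEquiv.toMatrix := by
  rw [star_eq_conjTranspose, Equiv.toPEquiv_symm, PEquiv.toMatrix_symm]
  ext i j
  simp [conjTranspose_apply, PEquiv.toMatrix_apply, apply_ite (star : ℂ → ℂ)]

lemma perm_mem_unitary {n : ℕ} (σ : Equiv.Perm (Fin n)) :
    (σ.toPEquiv.toMatrix : Mat n) ∈ unitaryGroup (Fin n) ℂ := by
  rw [mem_unitaryGroup_iff', perm_star, PEquiv.toMatrix_toPEquiv_mul]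
  have h2 : (σ.toPEquiv.toMatrix : Mat n) = (1 : Mat n).submatrix σ id := by
    ext i j; rw [PEquiv.toMatrix_toPEquiv_eq]
  rw [h2, submatrix_submatrix]
  ext i j
  simp [Matrix.one_apply, Equiv.eq_symm_apply]

lemma perm_conj_diagonal {n : ℕ} (σ : Equiv.Perm (Fin n)) (d : Fin n → ℂ) :
    (σ.toPEquiv.toMatrix : Mat n) * diagonal d * star (σ.toPEquiv.toMatrix : Mat n)
      = diagonal (d ∘ σ) := by
  rw [perm_star, PEquiv.toMatrix_toPEquiv_mul, PEquiv.mul_toMatrix_toPEquiv, Equiv.symm_symm,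
    submatrix_submatrix, Function.comp_id, Function.id_comp, submatrix_diagonal_equiv]

lemma subtypeCongr_prop_pos {n : ℕ} {p q : Fin n → Prop} [DecidablePred p] [DecidablePred q]
    (e : {x // p x} ≃ {x // q x}) (f : {x // ¬ p x} ≃ {x // ¬ q x}) (j : Fin n) (h : p j) :
    q (Equiv.subtypeCongr e f j) := by
  have heq : Equiv.subtypeCongr e f j = ↑(e ⟨j, h⟩) := by
    simp [Equiv.subtypeCongr, Equiv.sumCompl_symm_apply_of_pos h]
  rw [heq]; exact (e ⟨j, h⟩).2

lemma subtypeCongr_prop_neg {n : ℕ} {p q : Fin n → Prop} [DecidablePred p] [DecidablePred q]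
    (e : {x // p x} ≃ {x // q x}) (f : {x // ¬ p x} ≃ {x // ¬ q x}) (j : Fin n) (h : ¬ p j) :
    ¬ q (Equiv.subtypeCongr e f j) := by
  have heq : Equiv.subtypeCongr e f j = ↑(f ⟨j, h⟩) := by
    simp [Equiv.subtypeCongr, Equiv.sumCompl_symm_apply_of_neg h]
  rw [heq]; exact (f ⟨j, h⟩).2

end PsiAux
namespace PsiAux
open Matrix

lemma key {n : ℕ} (hn : 2 ≤ n) (heven : Even n) {X : Mat n} (hX : X ∈ su n)
    (h : psiMat n X X = 0) : ∃ (U : SU n) (a : ℝ), X = a • conjMat U (Lambda n) := by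
  classical
  have hn0 : 0 < n := by omega
  have hnC : (n : ℂ) ≠ 0 := Nat.cast_ne_zero.mpr hn0.ne'
  -- Step 1: X * X is a scalar matrix
  rw [psiMat, smul_eq_zero] at h
  rcases h with h | h
  · exact absurd h Complex.I_ne_zero
  rw [sub_eq_zero] at h
  set c : ℂ := (X * X + X * X).trace / n / 2 with hc
  have hXX : X * X = c • 1 := by
    have h2 : (2 : ℂ) • (X * X) = ((X * X + X * X).trace / n) • 1 := by
      rw [two_smul]; exact h
    have h3 : X * X = (2⁻¹ : ℂ) • ((2 : ℂ) • (X * X)) := by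
      rw [smul_smul]; norm_num
    rw [h3, h2, smul_smul, hc]
    ring_nf
  -- Step 2: the Hermitian matrix H with X = I • H
  set H : Mat n := (-Complex.I) • X with hHdef
  have hXH : X = Complex.I • H := by
    rw [hHdef, smul_smul]
    simp [Complex.I_mul_I]
  have hHerm : H.IsHermitian := by
    rw [Matrix.IsHermitian, hHdef, conjTranspose_smul, hX.1]
    simp [Complex.star_def]
  have hHsq : H * H = (-c) • 1 := by
    rw [hHdef, smul_mul_smul_comm, hXX, smul_smul]
    congr 1
    have : (-Complex.I) * (-Complex.I) = -1 := by
      have := Complex.I_mul_I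
      ring_nf
      ring_nf at this
      linear_combination this
    rw [this]; ring
  set U0 : Mat n := (hHerm.eigenvectorUnitary : Mat n) with hU0def
  have hU0 : U0 ∈ unitaryGroup (Fin n) ℂ := hHerm.eigenvectorUnitary.2
  set ev : Fin n → ℝ := hHerm.eigenvalues with hev
  set D : Mat n := Matrix.diagonal (RCLike.ofReal ∘ ev) with hD
  have hspec : H = U0 * D * star U0 := hHerm.spectral_theorem
  have hU0s : star U0 * U0 = 1 := mem_unitaryGroup_iff'.mp hU0
  have hU0s' : U0 * star U0 = 1 := mem_unitaryGroup_iff.mp hU0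
  -- Step 3: D * D = (-c) • 1
  have hDsq : D * D = (-c) • 1 := by
    have h1 : U0 * (D * D) * star U0 = (-c) • 1 := by
      have : (U0 * D * star U0) * (U0 * D * star U0) = U0 * (D * D) * star U0 := by
        calc (U0 * D * star U0) * (U0 * D * star U0)
            = U0 * D * ((star U0 * U0) * (D * star U0)) := by simp only [Matrix.mul_assoc]
          _ = U0 * (D * D) * star U0 := by
              rw [hU0s, Matrix.one_mul]; simp only [Matrix.mul_assoc]
      rw [← this, ← hspec, hHsq]
    calc D * D = (star U0 * U0) * (D * D) * (star U0 * U0) := by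
          rw [hU0s]; rw [Matrix.one_mul, Matrix.mul_one]
      _ = star U0 * (U0 * (D * D) * star U0) * U0 := by simp only [Matrix.mul_assoc]
      _ = star U0 * ((-c) • 1) * U0 := by rw [h1]
      _ = (-c) • (star U0 * U0) := by
          rw [Matrix.mul_smul, Matrix.mul_one, Matrix.smul_mul]
      _ = (-c) • 1 := by rw [hU0s]
  have hevsq : ∀ j, ((ev j : ℂ)) ^ 2 = -c := by
    intro j
    have h1 : (D * D) j j = ((-c) • (1 : Mat n)) j j := by rw [hDsq]
    rw [hD, diagonal_mul_diagonal] at h1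
    simp only [Matrix.smul_apply, diagonal_apply_eq, Function.comp_apply,
      Matrix.one_apply_eq, smul_eq_mul, mul_one] at h1
    rw [sq]; exact h1
  -- Step 4: eigenvalues are ±a
  set j0 : Fin n := ⟨0, hn0⟩ with hj0
  set a : ℝ := |ev j0| with ha
  have ha2 : ∀ j, ev j = a ∨ ev j = -a := by
    intro j
    have h1 : ((ev j : ℂ)) ^ 2 = ((a : ℂ)) ^ 2 := by
      rw [hevsq j, ← hevsq j0]
      norm_cast
      rw [ha, sq_abs]
    have h2 : (ev j) ^ 2 = a ^ 2 := by exact_mod_cast h1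
    exact sq_eq_sq_iff_eq_or_eq_neg.mp h2
  by_cases ha0 : a = 0
  · -- X = 0
    have hD0 : D = 0 := by
      rw [hD]
      ext i j
      by_cases hij : i = j
      · subst hij
        rcases ha2 i with h' | h' <;>
          simp [diagonal_apply_eq, Function.comp_apply, h', ha0]
      · simp [diagonal_apply_ne _ hij]
    have hX0 : X = 0 := by
      rw [hXH, hspec, hD0]
      simp
    exact ⟨1, 0, by rw [hX0, zero_smul]⟩
  have haPos : 0 < a := lt_of_le_of_ne (abs_nonneg _) (Ne.symm ha0)
  -- Step 5: sum of eigenvalues is zero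
  have hTr : ∑ j, ev j = 0 := by
    have h1 : H.trace = 0 := by
      rw [hHdef, trace_smul, hX.2, smul_zero]
    have h2 : H.trace = ∑ j, ((ev j : ℂ)) := by
      conv_lhs => rw [hspec]
      rw [trace_mul_cycle, hU0s, Matrix.one_mul, trace_diagonal]
      rfl
    have h3 : ((∑ j, ev j : ℝ) : ℂ) = 0 := by
      push_cast
      rw [← h2, h1]
    exact_mod_cast h3
  -- Step 6: counting
  set p : Fin n → Prop := fun j => ev j = a with hp
  set q : Fin n → Prop := fun j : Fin n => (j : ℕ) % 2 = 0 with hq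
  set k : ℕ := (Finset.univ.filter p).card with hk
  set m : ℕ := (Finset.univ.filter (fun j => ¬ p j)).card with hm
  have hkm : k + m = n := by
    rw [hk, hm, Finset.card_filter_add_card_filter_not, Finset.card_univ,
      Fintype.card_fin]
  have hsum : a * k - a * m = 0 := by
    have h1 : ∑ j ∈ Finset.univ.filter p, ev j = a * k := by
      rw [Finset.sum_congr rfl (fun j hj => (Finset.mem_filter.mp hj).2),
        Finset.sum_const, nsmul_eq_mul, mul_comm, hk]
    have h2 : ∑ j ∈ Finset.univ.filter (fun j => ¬ p j), ev j = -(a * m) := by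
      have : ∀ j ∈ Finset.univ.filter (fun j => ¬ p j), ev j = -a := by
        intro j hj
        rcases ha2 j with h' | h'
        · exact absurd h' (Finset.mem_filter.mp hj).2
        · exact h'
      rw [Finset.sum_congr rfl this, Finset.sum_const, nsmul_eq_mul, hm]
      ring
    have h3 := Finset.sum_filter_add_sum_filter_not Finset.univ p ev
    rw [h1, h2, hTr] at h3
    linarith
  have hkm' : k = m := by
    have : (k : ℝ) = m := by
      have := haPos.ne'
      have h4 : a * ((k : ℝ) - m) = 0 := by linarith
      rcases mul_eq_zero.mp h4 with h' | h'
      · exact absurd h' this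
      · linarith
    exact_mod_cast this
  have hkn : k = n / 2 := by
    obtain ⟨l, hl⟩ := heven
    omega
  have hcard1 : Fintype.card {j // p j} = Fintype.card {j : Fin n // q j} := by
    have h1 := card_even n heven
    rw [Fintype.card_subtype] at h1
    rw [Fintype.card_subtype, Fintype.card_subtype, ← hk, h1, hkn]
  have hcard2 : Fintype.card {j // ¬ p j} = Fintype.card {j : Fin n // ¬ q j} := by
    rw [Fintype.card_subtype_compl, Fintype.card_subtype_compl, hcard1]
  set e : {j // p j} ≃ {j : Fin n // q j} := Fintype.equivOfCardEq hcard1 with hedef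
  set f : {j // ¬ p j} ≃ {j : Fin n // ¬ q j} := Fintype.equivOfCardEq hcard2 with hfdef
  set σ : Equiv.Perm (Fin n) := Equiv.subtypeCongr e f with hσdef
  -- Step 7: the key diagonal identity
  have hdiag : Complex.I • D = (a : ℂ) • diagonal (dC n ∘ σ) := by
    rw [hD]
    ext i j
    by_cases hij : i = j
    · subst hij
      simp only [Matrix.smul_apply, diagonal_apply_eq, Function.comp_apply, smul_eq_mul]
      show Complex.I * ((ev i : ℝ) : ℂ) = (a : ℂ) * dC n (σ i)
      rcases ha2 i with h' | h'
      · have hpi : p i := h'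
        have hqi : q (σ i) := subtypeCongr_prop_pos e f i hpi
        rw [show dC n (σ i) = Complex.I from if_pos hqi, h']
        push_cast
        ring
      · have hpi : ¬ p i := by
          intro hpi
          rw [hp] at hpi
          rw [hpi] at h'
          apply ha0
          linarith
        have hqi : ¬ q (σ i) := subtypeCongr_prop_neg e f i hpi
        rw [show dC n (σ i) = -Complex.I from if_neg hqi, h']
        push_cast
        ring
    · simp [diagonal_apply_ne _ hij]
  -- Step 8: assembling the unitary matrix
  set P : Mat n := σ.toPEquiv.toMatrix with hPdef
  set W : Mat n := U0 * P with hWdef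
  have hWu : W ∈ unitaryGroup (Fin n) ℂ := mul_mem hU0 (perm_mem_unitary σ)
  have hPL : P * Lambda n * star P = diagonal (dC n ∘ σ) := by
    rw [hPdef, Lambda_eq]
    exact perm_conj_diagonal σ (dC n)
  have hXW : X = (a : ℂ) • (W * Lambda n * star W) := by
    have e1 : U0 * (Complex.I • D) * star U0 = Complex.I • (U0 * D * star U0) := by
      simp only [Matrix.mul_smul, Matrix.smul_mul]
    rw [hXH, hspec, ← e1, hdiag, ← hPL, hWdef]
    simp only [Matrix.star_mul, Matrix.mul_smul, Matrix.smul_mul, Matrix.mul_assoc]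
  -- Step 9: fixing the determinant
  have hdet := det_of_mem_unitary hWu
  have hdet1 : star W.det * W.det = 1 := hdet.1
  have hdetnorm : ‖W.det‖ = 1 := by
    have h2 : ‖W.det‖ * ‖W.det‖ = 1 := by
      have := congrArg norm hdet1
      rwa [norm_mul, norm_star, norm_one] at this
    nlinarith [norm_nonneg W.det]
  have hdetne : W.det ≠ 0 := by
    intro h0
    rw [h0, mul_zero] at hdet1
    exact zero_ne_one hdet1
  obtain ⟨ζ, hζ⟩ := IsAlgClosed.exists_pow_nat_eq (W.det)⁻¹ hn0
  have hζnorm : ‖ζ‖ = 1 := by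
    have h1 : ‖ζ‖ ^ n = 1 := by
      rw [← norm_pow, hζ, norm_inv, hdetnorm]
      norm_num
    rcases lt_trichotomy ‖ζ‖ 1 with hl | he' | hg
    · have := pow_lt_one₀ (norm_nonneg ζ) hl hn0.ne'
      rw [h1] at this
      exact absurd this (lt_irrefl 1)
    · exact he'
    · have := one_lt_pow₀ hg hn0.ne'
      rw [h1] at this
      exact absurd this (lt_irrefl 1)
  have hζ1 : star ζ * ζ = 1 := by
    rw [Complex.star_def, mul_comm, Complex.mul_conj, Complex.normSq_eq_norm_sq,
      hζnorm]
    norm_num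
  have hζ1' : ζ * star ζ = 1 := by rw [mul_comm]; exact hζ1
  have hmem : ζ • W ∈ SU n := by
    rw [mem_specialUnitaryGroup_iff]
    constructor
    · rw [mem_unitaryGroup_iff', star_smul, smul_mul_smul_comm, hζ1,
        mem_unitaryGroup_iff'.mp hWu, one_smul]
    · rw [det_smul, Fintype.card_fin, hζ, inv_mul_cancel₀ hdetne]
  refine ⟨⟨ζ • W, hmem⟩, a, ?_⟩
  have hconj : conjMat ⟨ζ • W, hmem⟩ (Lambda n) = W * Lambda n * star W := by
    rw [conjMat_eq]
    show (ζ • W) * Lambda n * star (ζ • W) = _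
    rw [star_smul]
    simp only [Matrix.smul_mul, Matrix.mul_smul, smul_smul]
    rw [hζ1, one_smul]
  rw [real_smul_eq, hconj]
  exact hXW
end PsiAux
/-- For even `n ≥ 2` and `Ψ = ψ₁ + ψ₂` on `g = su(n) ⊕ su(n)`:
`Ψ(x,x) = 0` iff each component of `x` is a real multiple of an `SU(n)`-conjugate of `Λ`,
i.e. the zero set of `x ↦ Ψ(x,x)` is the `SU(n) × SU(n)`-orbit of the plane spanned by
`(Λ,0)` and `(0,Λ)`. -/
theorem psi_zero_set_of_even (n : ℕ) (hn : 2 ≤ n) (heven : Even n) (x : gsu n) :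
    (psi1 n + psi2 n) (x, x) = 0 ↔
    ∃ (U V : SU n) (a b : ℝ),
      (x.1 : Mat n) = a • conjMat U (Lambda n) ∧ (x.2 : Mat n) = b • conjMat V (Lambda n) := by
  have hn0 : 0 < n := by omega
  have hiff : (psi1 n + psi2 n) (x, x) = 0 ↔
      psiMat n (x.1 : Mat n) (x.1 : Mat n) = 0 ∧ psiMat n (x.2 : Mat n) (x.2 : Mat n) = 0 := by
    rw [Pi.add_apply, Prod.ext_iff]
    simp only [psi1, psi2, Prod.fst_add, Prod.snd_add, Prod.fst_zero, Prod.snd_zero,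
      add_zero, zero_add, Subtype.ext_iff, ZeroMemClass.coe_zero]
  rw [hiff]
  constructor
  · rintro ⟨h1, h2⟩
    obtain ⟨U, a, hU⟩ := PsiAux.key hn heven x.1.2 h1
    obtain ⟨V, b, hV⟩ := PsiAux.key hn heven x.2.2 h2
    exact ⟨U, V, a, b, hU, hV⟩
  · rintro ⟨U, V, a, b, h1, h2⟩
    constructor
    · apply PsiAux.psiMat_self_zero hn0
      rw [h1]
      exact PsiAux.conj_sq U a
    · apply PsiAux.psiMat_self_zero hn0
      rw [h2]
      exact PsiAux.conj_sq V b
end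

section
/- Let n ≥ 2 and let Z ∈ su(n). Then Z² = (tr(Z²)/n)·Id if and only if either Z = 0, or n is even and there exist a ∈ ℝ and U ∈ SU(n) such that Z = a·UΛU⁻¹. -/
open Matrix

/- ## auxiliary lemmas -/

lemma real_smul_mat {n : ℕ} (r : ℝ) (M : Mat n) : r • M = (r : ℂ) • M := by
  ext i j
  simp [Matrix.smul_apply, Complex.real_smul]

lemma conj_mul_conj {n : ℕ} (V A B : Mat n) (h1 : star V * V = 1) :
    (V * A * star V) * (V * B * star V) = V * (A * B) * star V := by
  rw [Matrix.mul_assoc (V * A) (star V), Matrix.mul_assoc V B, ← Matrix.mul_assoc (star V) V,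
    h1, Matrix.one_mul]
  simp only [Matrix.mul_assoc]

lemma conj_cancel_left {n : ℕ} (V A : Mat n) (h1 : star V * V = 1) :
    star V * (V * A * star V) * V = A := by
  rw [Matrix.mul_assoc V A, ← Matrix.mul_assoc (star V) V, h1, Matrix.one_mul,
    Matrix.mul_assoc A, h1, Matrix.mul_one]

lemma Lambda_mul_Lambda (n : ℕ) : Lambda n * Lambda n = -1 := by
  rw [Lambda, diagonal_mul_diagonal]
  ext i j
  rcases eq_or_ne i j with rfl | hij
  · simp only [Matrix.diagonal_apply_eq, Matrix.neg_apply, Matrix.one_apply_eq]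
    split_ifs <;> simp [Complex.I_mul_I]
  · simp [Matrix.diagonal_apply_ne _ hij, Matrix.one_apply_ne hij]

lemma nonneg_pow_eq_one {x : ℝ} (hx : 0 ≤ x) {n : ℕ} (hn : n ≠ 0) (h : x ^ n = 1) : x = 1 := by
  rcases lt_trichotomy x 1 with h1 | h1 | h1
  · have := pow_lt_one₀ hx h1 hn; linarith
  · exact h1
  · have := one_lt_pow₀ h1 hn; linarith

def evenEquiv {n m : ℕ} (h : n = 2 * m) : Fin m ≃ {j : Fin n // (j : ℕ) % 2 = 0} where
  toFun k := ⟨⟨2 * k, by have := k.isLt; omega⟩, by simp⟩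
  invFun j := ⟨(j : Fin n) / 2, by have := (j : Fin n).isLt; have := j.2; omega⟩
  left_inv k := by ext; simp
  right_inv j := by have h2 := j.2; ext; simp; omega

def oddEquiv {n m : ℕ} (h : n = 2 * m) : Fin m ≃ {j : Fin n // ¬ ((j : ℕ) % 2 = 0)} where
  toFun k := ⟨⟨2 * k + 1, by have := k.isLt; omega⟩, by simp⟩
  invFun j := ⟨(j : Fin n) / 2, by have := (j : Fin n).isLt; have := j.2; omega⟩
  left_inv k := by ext; simp; omega
  right_inv j := by have h2 := j.2; ext; simp; omega

/-- For `n ≥ 2` and `Z ∈ su(n)`: `Z² = (tr(Z²)/n)·Id` iff either `Z = 0`,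
or `n` is even and `Z` is a real multiple of an `SU(n)`-conjugate of `Λ`. -/
theorem sq_eq_scalar_iff_zero_or_conjugate_Lambda (n : ℕ) (hn : 2 ≤ n) (Z : Mat n)
    (hZ : Z ∈ su n) :
    Z * Z = ((Z * Z).trace / n) • (1 : Mat n) ↔
    Z = 0 ∨ (Even n ∧ ∃ (a : ℝ) (U : SU n), Z = a • conjMat U (Lambda n)) := by
  classical
  obtain ⟨hskew, htr⟩ := hZ
  have hn0 : (n : ℂ) ≠ 0 := Nat.cast_ne_zero.mpr (by omega)
  constructor
  · intro h
    by_cases hZ0 : Z = 0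
    · exact Or.inl hZ0
    right
    set c : ℂ := (Z * Z).trace / n with hc
    set H : Mat n := Complex.I • Z with hH_def
    have hH : H.IsHermitian := by
      rw [Matrix.IsHermitian, hH_def, conjTranspose_smul, hskew]
      simp [Complex.conj_I, smul_smul]
    have hZH : Z = (-Complex.I) • H := by
      rw [hH_def, smul_smul]
      simp
    set V : Mat n := (hH.eigenvectorUnitary : Mat n) with hV_def
    have hV1 : star V * V = 1 := hH.eigenvectorUnitary.2.1
    have hV2 : V * star V = 1 := hH.eigenvectorUnitary.2.2
    set μ : Fin n → ℝ := hH.eigenvalues with hμ_def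
    set D : Mat n := diagonal (fun j => (μ j : ℂ)) with hD_def
    have spectral : H = V * D * star V := hH.spectral_theorem
    -- the squared eigenvalue relation
    have hHH : H * H = (-c) • 1 := by
      rw [hH_def, smul_mul_assoc, mul_smul_comm, smul_smul, Complex.I_mul_I, h, smul_smul]
      ring_nf
    have hDD : D * D = (-c) • 1 := by
      have e1 : V * (D * D) * star V = (-c) • 1 := by
        rw [← conj_mul_conj V D D hV1, ← spectral]; exact hHH
      calc D * D = star V * (V * (D * D) * star V) * V := (conj_cancel_left V (D * D) hV1).symm
        _ = star V * ((-c) • 1) * V := by rw [e1]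
        _ = (-c) • (star V * V) := by
            rw [mul_smul_comm, Matrix.mul_one, smul_mul_assoc]
        _ = (-c) • 1 := by rw [hV1]
    have hsq : ∀ j, (μ j : ℂ) * (μ j : ℂ) = -c := by
      have : diagonal (fun j => (μ j : ℂ) * (μ j : ℂ)) = diagonal (fun _ : Fin n => -c) := by
        rw [← diagonal_mul_diagonal, ← hD_def, hDD]
        ext i j
        by_cases hij : i = j <;> simp [Matrix.one_apply, Matrix.diagonal_apply, hij]
      intro j
      have := congrFun (congrFun this j) j
      simpa [Matrix.diagonal_apply] using this
    -- trace relation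
    have hsum : ∑ j, μ j = 0 := by
      have h1 : H.trace = 0 := by
        rw [hH_def, trace_smul, htr, smul_zero]
      have h2 : H.trace = ∑ j, (μ j : ℂ) := by
        rw [spectral, trace_mul_cycle, hV1, Matrix.one_mul, hD_def, trace_diagonal]
      rw [h1] at h2
      exact_mod_cast h2.symm
    -- nonzero eigenvalue
    set j0 : Fin n := ⟨0, by omega⟩ with hj0_def
    have hjj0 : ∀ j, μ j * μ j = μ j0 * μ j0 := by
      intro j
      have := (hsq j).trans (hsq j0).symm
      exact_mod_cast this
    have hj0ne : μ j0 ≠ 0 := by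
      intro h0
      apply hZ0
      have hall : ∀ j, μ j = 0 := by
        intro j
        have := hjj0 j
        rw [h0] at this
        nlinarith [this]
      have hD0 : D = 0 := by
        rw [hD_def]
        ext i j
        by_cases hij : i = j <;> simp [Matrix.diagonal_apply, hij, hall]
      rw [hZH, spectral, hD0]
      simp
    set a : ℝ := |μ j0| with ha_def
    have ha0 : 0 < a := abs_pos.mpr hj0ne
    have hcases : ∀ j, μ j = -a ∨ μ j = a := by
      intro j
      have h2 : μ j * μ j = a * a := by rw [hjj0 j, ha_def, abs_mul_abs_self]
      rcases mul_self_eq_mul_self_iff.mp h2 with h | h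
      · exact Or.inr h
      · exact Or.inl h
    -- counting
    set S := Finset.univ.filter (fun j => μ j = -a) with hS_def
    set m := S.card with hm_def
    set T := Finset.univ.filter (fun j => ¬ (μ j = -a)) with hT_def
    have hmk : m + T.card = n := by
      rw [hm_def, hS_def, hT_def, Finset.card_filter_add_card_filter_not,
        Finset.card_univ, Fintype.card_fin]
    have hsumS : ∑ j ∈ S, μ j = m * (-a) := by
      rw [Finset.sum_congr rfl (fun j hj => (Finset.mem_filter.mp hj).2), Finset.sum_const,
        nsmul_eq_mul]
    have hsumT : ∑ j ∈ T, μ j = T.card * a := by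
      have hTa : ∀ j ∈ T, μ j = a := by
        intro j hj
        rcases hcases j with h | h
        · exact absurd h (Finset.mem_filter.mp hj).2
        · exact h
      rw [Finset.sum_congr rfl hTa, Finset.sum_const, nsmul_eq_mul]
    have hTm : T.card = m := by
      have := Finset.sum_filter_add_sum_filter_not Finset.univ (fun j => μ j = -a) μ
      rw [← hS_def, ← hT_def, hsumS, hsumT, hsum] at this
      have : (T.card : ℝ) * a = (m : ℝ) * a := by linarith
      have := mul_right_cancel₀ (ne_of_gt ha0) this
      exact_mod_cast this
    have hn2m : n = 2 * m := by omega
    -- the permutation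
    have hcardS : Fintype.card {j : Fin n // μ j = -a} = m := by
      rw [Fintype.card_subtype]
    have hcardT : Fintype.card {j : Fin n // ¬ (μ j = -a)} = m := by
      rw [Fintype.card_subtype, ← hTm]
    set eS : Fin m ≃ {j : Fin n // μ j = -a} :=
      Fintype.equivOfCardEq (by rw [Fintype.card_fin, hcardS]) with heS
    set eT : Fin m ≃ {j : Fin n // ¬ (μ j = -a)} :=
      Fintype.equivOfCardEq (by rw [Fintype.card_fin, hcardT]) with heT
    set σ : Fin n ≃ Fin n :=
      ((Equiv.sumCompl (fun j : Fin n => (j : ℕ) % 2 = 0)).symm.trans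
        ((Equiv.sumCongr ((evenEquiv hn2m).symm.trans eS) ((oddEquiv hn2m).symm.trans eT)).trans
          (Equiv.sumCompl (fun j : Fin n => μ j = -a)))) with hσ_def
    have hσ : ∀ j : Fin n, ((j : ℕ) % 2 = 0 → μ (σ j) = -a) ∧ (¬ ((j : ℕ) % 2 = 0) → μ (σ j) = a) := by
      intro j
      constructor
      · intro hj
        have h1 : (Equiv.sumCompl (fun j : Fin n => (j : ℕ) % 2 = 0)).symm j = Sum.inl ⟨j, hj⟩ :=
          Equiv.sumCompl_symm_apply_of_pos (p := fun j : Fin n => (j : ℕ) % 2 = 0) hj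
        have : σ j = ↑(eS ((evenEquiv hn2m).symm ⟨j, hj⟩)) := by
          rw [hσ_def]
          simp [h1]
        rw [this]
        exact (eS ((evenEquiv hn2m).symm ⟨j, hj⟩)).2
      · intro hj
        have h1 : (Equiv.sumCompl (fun j : Fin n => (j : ℕ) % 2 = 0)).symm j = Sum.inr ⟨j, hj⟩ :=
          Equiv.sumCompl_symm_apply_of_neg (p := fun j : Fin n => (j : ℕ) % 2 = 0) hj
        have : σ j = ↑(eT ((oddEquiv hn2m).symm ⟨j, hj⟩)) := by
          rw [hσ_def]
          simp [h1]
        rw [this]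
        rcases hcases ↑(eT ((oddEquiv hn2m).symm ⟨j, hj⟩)) with h | h
        · exact absurd h (eT ((oddEquiv hn2m).symm ⟨j, hj⟩)).2
        · exact h
    -- the diagonal matrix of Z
    set Dz : Mat n := diagonal (fun j => -Complex.I * (μ j : ℂ)) with hDz_def
    have hDzD : Dz = (-Complex.I) • D := by
      rw [hDz_def, hD_def, ← Matrix.diagonal_smul]
      apply congrArg
      funext j
      simp [smul_eq_mul]
    have hZD : Z = V * Dz * star V := by
      rw [hZH, spectral, hDzD, mul_smul_comm, smul_mul_assoc]
    have hΛ : Dz.submatrix σ σ = (a : ℝ) • Lambda n := by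
      rw [hDz_def, Matrix.submatrix_diagonal_equiv, Lambda, real_smul_mat, ← Matrix.diagonal_smul]
      apply congrArg
      funext j
      simp only [Function.comp_apply, Pi.smul_apply, smul_eq_mul]
      by_cases hj : (j : ℕ) % 2 = 0
      · rw [(hσ j).1 hj, if_pos hj]
        push_cast
        ring
      · rw [(hσ j).2 hj, if_neg hj]
        push_cast
        ring
    -- the conjugating unitary
    set W : Mat n := V.submatrix id ⇑σ with hW_def
    have hstarW : star W = (star V).submatrix ⇑σ id := by
      rw [hW_def, Matrix.star_eq_conjTranspose, Matrix.conjTranspose_submatrix,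
        ← Matrix.star_eq_conjTranspose]
    have hW2 : W * star W = 1 := by
      rw [hstarW, hW_def]
      have := Matrix.submatrix_mul_equiv V (star V) (id : Fin n → Fin n) σ (id : Fin n → Fin n)
      rw [this, hV2, Matrix.submatrix_id_id]
    have hW1 : star W * W = 1 := by
      rw [hstarW, hW_def]
      have := Matrix.submatrix_mul_equiv (star V) V (⇑σ) (Equiv.refl (Fin n)) (⇑σ)
      simp only [Equiv.coe_refl] at this
      rw [this, hV1, Matrix.submatrix_one_equiv]
    have hZW : Z = (a : ℝ) • (W * Lambda n * star W) := by
      have e1 : W * ((a : ℝ) • Lambda n) * star W = Z := by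
        rw [← hΛ, hstarW, hW_def]
        have e2 := Matrix.submatrix_mul_equiv V Dz (id : Fin n → Fin n) σ (⇑σ)
        have e3 := Matrix.submatrix_mul_equiv (V * Dz) (star V) (id : Fin n → Fin n) σ
          (id : Fin n → Fin n)
        rw [e2, e3, Matrix.submatrix_id_id, hZD]
      rw [← e1, mul_smul_comm, smul_mul_assoc]
    -- fix the determinant
    have hdet : Complex.normSq (W.det) = 1 := by
      have h2 := congrArg Matrix.det hW2
      rw [Matrix.det_mul, Matrix.det_one, Matrix.star_eq_conjTranspose,
        Matrix.det_conjTranspose, RCLike.star_def, Complex.mul_conj] at h2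
      exact_mod_cast h2
    have hdW0 : W.det ≠ 0 := by
      intro h0
      rw [h0] at hdet
      simp at hdet
    obtain ⟨z, hz⟩ := IsAlgClosed.exists_pow_nat_eq (W.det)⁻¹ (n := n) (by omega)
    have hznorm : Complex.normSq z = 1 := by
      have h1 : Complex.normSq z ^ n = 1 := by
        rw [← map_pow, hz, map_inv₀, hdet]
        norm_num
      exact nonneg_pow_eq_one (Complex.normSq_nonneg z) (by omega) h1
    have hzz : z * (starRingEnd ℂ) z = 1 := by
      rw [Complex.mul_conj, hznorm, Complex.ofReal_one]
    set U : SU n := ⟨z • W, by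
      rw [Matrix.mem_specialUnitaryGroup_iff]
      constructor
      · rw [Matrix.mem_unitaryGroup_iff, star_smul, smul_mul_assoc, mul_smul_comm, smul_smul,
          hW2, RCLike.star_def, hzz, one_smul]
      · rw [Matrix.det_smul, Fintype.card_fin, hz, inv_mul_cancel₀ hdW0]⟩ with hU_def
    refine ⟨⟨m, by omega⟩, a, U, ?_⟩
    have hconj : conjMat U (Lambda n) = W * Lambda n * star W := by
      rw [conjMat, SU.inv_coe, hU_def]
      show (z • W) * Lambda n * star (z • W) = W * Lambda n * star W
      rw [star_smul, smul_mul_assoc, smul_mul_assoc, mul_smul_comm, smul_smul, RCLike.star_def,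
        hzz, one_smul]
    rw [hconj]
    exact hZW
  · rintro (rfl | ⟨hev, a, U, rfl⟩)
    · simp
    set C : Mat n := conjMat U (Lambda n) with hC_def
    have hU1 : star (U : Mat n) * (U : Mat n) = 1 := SU.star_mul_self U
    have hU2 : (U : Mat n) * star (U : Mat n) = 1 := by
      rw [mul_eq_one_comm]; exact hU1
    have hCform : C = (U : Mat n) * Lambda n * star (U : Mat n) := by
      rw [hC_def, conjMat, SU.inv_coe]
    have hCC : C * C = -1 := by
      rw [hCform, conj_mul_conj _ _ _ hU1, Lambda_mul_Lambda]
      rw [Matrix.mul_neg, Matrix.mul_one, Matrix.neg_mul, hU2]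
    have hZZ : (a • C) * (a • C) = ((a * a : ℝ) : ℂ) • (-1 : Mat n) := by
      rw [smul_mul_assoc, mul_smul_comm, smul_smul, hCC, real_smul_mat]
    rw [hZZ]
    have htrace : (((a * a : ℝ) : ℂ) • (-1 : Mat n)).trace = ((a * a : ℝ) : ℂ) * (-(n : ℂ)) := by
      rw [trace_smul, trace_neg, trace_one, Fintype.card_fin, smul_eq_mul]
    rw [htrace]
    have hsc : (((a * a : ℝ) : ℂ) * (-(n : ℂ))) / (n : ℂ) = -((a * a : ℝ) : ℂ) := by
      field_simp
    rw [hsc, smul_neg, neg_smul]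
end
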